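/- arXiv:2108.08486 — 8 statements merged into one kernel-verified Lean document; each statement's English description precedes it below -/
import Mathlib

section
/- Let K1, F1, Z1, S1 be positive integers with Z1 < F1, and suppose there exists a (K1,F1,Z1,S1) placement delivery array satisfying Condition 1 with parameter λ. Then for every positive integer m there exists an (m·K1, λ·(F1/λ)^m, Z1·(F1/λ)^{m−1}, S1·(F1/λ)^{m−1}) placement delivery array. -/
/-!
Write `f = F₁ / λ`. Condition 1 lets us index the rows of `P` by pairs `(a, x) ∈ [λ] × [f]`
and the integers by pairs `(x, ρ) ∈ [f] × [q]` so that every row `(a, x)` is a star row for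
every integer `(x, ρ)`.

The new array has rows `(a, b)` with `b : [m] → [f]` and columns `(i, k) ∈ [m] × [K₁]`: its
entry is the entry of `P` at row `(a, b i)` and column `k`, with an integer `(x, ρ)` replaced
by `(ρ, b with b i replaced by x)`. Equal entries in one block `i` come from equal entries
of `P`, so (C3) is inherited. Equal entries in blocks `i ≠ i'` force `b i'` to be the
`x`-coordinate of the integer in block `i'`, so the cell to be checked lies in one of its
star rows.
-/

/-- A `(K,F,Z,S)` placement delivery array: an `F × K` array whose entries are either `*`
(encoded as `none`) or integers in `[1:S]` (encoded as `some s` with `s : Fin S`). -/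
def IsPDA (K F Z S : ℕ) (P : Fin F → Fin K → Option (Fin S)) : Prop :=
  (∀ k : Fin K, (Finset.univ.filter fun j : Fin F => P j k = none).card = Z) ∧
  (∀ s : Fin S, ∃ (j : Fin F) (k : Fin K), P j k = some s) ∧
  (∀ (j1 j2 : Fin F) (k1 k2 : Fin K) (s : Fin S),
      P j1 k1 = some s → P j2 k2 = some s → (j1, k1) ≠ (j2, k2) →
      P j1 k2 = none ∧ P j2 k1 = none)

/-- A PDA is `g`-regular if each integer appears exactly `g` times. -/
def PDARegular (K F S g : ℕ) (P : Fin F → Fin K → Option (Fin S)) : Prop :=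
  ∀ s : Fin S,
    (Finset.univ.filter fun jk : Fin F × Fin K => P jk.1 jk.2 = some s).card = g

/-- Row `i` is a star row for the integer `s`. -/
def PDAStarRow (K F S : ℕ) (P : Fin F → Fin K → Option (Fin S)) (i : Fin F) (s : Fin S) : Prop :=
  ∀ (j : Fin F) (k : Fin K), P j k = some s → P i k = none

/-- Condition 1 with parameter `lam`. -/
def PDACondition1 (K F Z S lam : ℕ) (P : Fin F → Fin K → Option (Fin S)) : Prop :=
  lam ∣ F ∧ lam ∣ Z ∧
  (∀ (j : Fin F) (k : Fin K),
      P j k = none ↔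
        P ⟨j.val % (F / lam), Nat.lt_of_le_of_lt (Nat.mod_le _ _) j.isLt⟩ k = none) ∧
  ∃ φ : Fin S → Fin (F / lam),
    (∀ s : Fin S, PDAStarRow K F S P (Fin.castLE (Nat.div_le_self F lam) (φ s)) s) ∧
    (∀ j : Fin (F / lam), (Finset.univ.filter fun s : Fin S => φ s = j).card * F = lam * S)

/-- Condition 2: every row contains the same number of stars. -/
def PDACondition2 (K F S : ℕ) (P : Fin F → Fin K → Option (Fin S)) : Prop :=
  ∀ j1 j2 : Fin F,
    (Finset.univ.filter fun k : Fin K => P j1 k = none).card =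
    (Finset.univ.filter fun k : Fin K => P j2 k = none).card

def IsPDAOn {R C S : Type*} [Fintype R] [DecidableEq S] (Z : ℕ) (P : R → C → Option S) : Prop :=
  (∀ k, (Finset.univ.filter fun j => P j k = none).card = Z) ∧
  (∀ s, ∃ j k, P j k = some s) ∧
  (∀ j1 j2 k1 k2 s, P j1 k1 = some s → P j2 k2 = some s → (j1, k1) ≠ (j2, k2) →
      P j1 k2 = none ∧ P j2 k1 = none)

theorem isPDA_iff_isPDAOn {K F Z S : ℕ} (P : Fin F → Fin K → Option (Fin S)) :
    IsPDA K F Z S P ↔ IsPDAOn Z P :=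
  Iff.rfl

theorem IsPDAOn.reindex {R C S R' C' S' : Type*} [Fintype R] [Fintype R'] [DecidableEq S]
    [DecidableEq S'] {Z : ℕ} {P : R → C → Option S} (hP : IsPDAOn Z P)
    (eR : R ≃ R') (eC : C ≃ C') (eS : S ≃ S') :
    IsPDAOn Z fun r c => (P (eR.symm r) (eC.symm c)).map eS := by
  obtain ⟨hstars, hcover, hpair⟩ := hP
  refine ⟨fun k => ?_, fun s => ?_, fun j1 j2 k1 k2 s h1 h2 hne => ?_⟩
  · simp only [Option.map_eq_none_iff]
    rw [← hstars (eC.symm k), ← Fintype.card_subtype, ← Fintype.card_subtype]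
    exact Fintype.card_congr (eR.symm.subtypeEquiv fun _ => Iff.rfl)
  · obtain ⟨j, k, h⟩ := hcover (eS.symm s)
    exact ⟨eR j, eC k, by simp [h]⟩
  · simp only [Option.map_eq_some_iff] at h1 h2
    obtain ⟨s1, h1, rfl⟩ := h1
    obtain ⟨s2, h2, hs⟩ := h2
    obtain rfl := eS.injective hs
    have hne' : (eR.symm j1, eC.symm k1) ≠ (eR.symm j2, eC.symm k2) := by
      simpa [Prod.ext_iff] using hne
    simpa using hpair _ _ _ _ _ h1 h2 hne'

section ProductPDA

variable {ι A X Q K S : Type*} [DecidableEq ι]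

def productPDA (E : S ≃ X × Q) (P : A × X → K → Option S) :
    A × (ι → X) → ι × K → Option (Q × (ι → X)) :=
  fun r c => (P (r.1, r.2 c.1) c.2).map fun s => ((E s).2, Function.update r.2 c.1 (E s).1)

variable (E : S ≃ X × Q) {P : A × X → K → Option S}

theorem card_productPDA_eq_none [Fintype ι] [Fintype A] [Fintype X] {Z : ℕ}
    (hstars : ∀ k, (Finset.univ.filter fun j => P j k = none).card = Z) (c : ι × K) :
    (Finset.univ.filter fun r => productPDA E P r c = none).card =
      Z * Fintype.card X ^ (Fintype.card ι - 1) := by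
  have e : {r : A × (ι → X) // P (r.1, r.2 c.1) c.2 = none} ≃
      {j : A × X // P j c.2 = none} × ({i // i ≠ c.1} → X) :=
    { toFun := fun r => (⟨(r.1.1, r.1.2 c.1), r.2⟩, fun i => r.1.2 i)
      invFun := fun y =>
        ⟨(y.1.1.1, (Equiv.funSplitAt c.1 X).symm (y.1.1.2, y.2)), by simpa using y.1.2⟩
      left_inv := fun r => by ext <;> grind [Equiv.funSplitAt_symm_apply]
      right_inv := fun y => by ext <;> grind [Equiv.funSplitAt_symm_apply] }
  simp only [productPDA, Option.map_eq_none_iff]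
  rw [← Fintype.card_subtype, Fintype.card_congr e, Fintype.card_prod, Fintype.card_subtype,
    hstars, Fintype.card_fun]
  simp

theorem exists_productPDA_eq_some [Nonempty ι]
    (hcover : ∀ s, ∃ j k, P j k = some s) (t : Q × (ι → X)) :
    ∃ r c, productPDA E P r c = some t := by
  obtain ⟨ρ, v⟩ := t
  obtain ⟨i⟩ := ‹Nonempty ι›
  obtain ⟨⟨a, x⟩, k, h⟩ := hcover (E.symm (v i, ρ))
  refine ⟨(a, Function.update v i x), (i, k), ?_⟩
  simp [productPDA, h]

theorem productPDA_eq_none_of_eq_some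
    (hpair : ∀ j1 j2 k1 k2 s, P j1 k1 = some s → P j2 k2 = some s → (j1, k1) ≠ (j2, k2) →
      P j1 k2 = none ∧ P j2 k1 = none)
    (hstar : ∀ s j k a, P j k = some s → P (a, (E s).1) k = none)
    {r1 r2 : A × (ι → X)} {c1 c2 : ι × K} {t : Q × (ι → X)}
    (h1 : productPDA E P r1 c1 = some t) (h2 : productPDA E P r2 c2 = some t)
    (hne : (r1, c1) ≠ (r2, c2)) :
    productPDA E P r1 c2 = none ∧ productPDA E P r2 c1 = none := by
  obtain ⟨a1, b1⟩ := r1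
  obtain ⟨a2, b2⟩ := r2
  obtain ⟨i1, k1⟩ := c1
  obtain ⟨i2, k2⟩ := c2
  simp only [productPDA, Option.map_eq_some_iff] at h1 h2
  simp only [productPDA, Option.map_eq_none_iff]
  obtain ⟨s1, hP1, rfl⟩ := h1
  obtain ⟨s2, hP2, ht⟩ := h2
  obtain ⟨hρ, hb⟩ := Prod.mk.inj ht
  by_cases hi : i1 = i2
  · subst hi
    obtain rfl : s2 = s1 := E.injective (Prod.ext (by simpa using congrFun hb i1) hρ)
    refine hpair _ _ _ _ s2 hP1 hP2 fun heq => hne ?_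
    simp only [Prod.mk.injEq] at heq
    obtain ⟨⟨rfl, hbi⟩, rfl⟩ := heq
    have hb12 : b1 = b2 := funext fun j => by
      by_cases hj : j = i1
      · exact hj ▸ hbi
      · simpa [hj] using (congrFun hb j).symm
    rw [hb12]
  · have hb1 : b1 i2 = (E s2).1 := by simpa [hi, Ne.symm hi] using (congrFun hb i2).symm
    have hb2 : b2 i1 = (E s1).1 := by simpa [hi, Ne.symm hi] using congrFun hb i1
    exact ⟨hb1 ▸ hstar s2 _ k2 a1 hP2, hb2 ▸ hstar s1 _ k1 a2 hP1⟩

theorem isPDAOn_productPDA [Fintype ι] [Nonempty ι] [Fintype A] [Fintype X] [DecidableEq X]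
    [DecidableEq Q] [DecidableEq S] {Z : ℕ} (hP : IsPDAOn Z P)
    (hstar : ∀ s j k a, P j k = some s → P (a, (E s).1) k = none) :
    IsPDAOn (Z * Fintype.card X ^ (Fintype.card ι - 1)) (productPDA (ι := ι) E P) :=
  ⟨card_productPDA_eq_none E hP.1, exists_productPDA_eq_some E hP.2.1,
    fun _ _ _ _ _ h1 h2 hne => productPDA_eq_none_of_eq_some E hP.2.2 hstar h1 h2 hne⟩

end ProductPDA

theorem exists_equiv_prod_fst_eq {S X : Type*} [Fintype S] [DecidableEq X] (φ : S → X)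
    {q : ℕ} (hφ : ∀ x, Fintype.card {s // φ s = x} = q) :
    ∃ E : S ≃ X × Fin q, ∀ s, (E s).1 = φ s :=
  ⟨(Equiv.sigmaFiberEquiv φ).symm.trans
    ((Equiv.sigmaCongrRight fun x => Fintype.equivFinOfCardEq (hφ x)).trans
      (Equiv.sigmaEquivProd X (Fin q))), fun _ => rfl⟩

theorem PDACondition1.exists_equiv_prod_starRow {K F Z S lam : ℕ}
    {P : Fin F → Fin K → Option (Fin S)} (hlam : 0 < lam) (h : PDACondition1 K F Z S lam P) :
    ∃ (eR : Fin lam × Fin (F / lam) ≃ Fin F) (q : ℕ) (E : Fin S ≃ Fin (F / lam) × Fin q),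
      ∀ s j k a, P j k = some s → P (eR (a, (E s).1)) k = none := by
  obtain ⟨hdvd, -, hstar, φ, hφrow, hφcard⟩ := h
  have hF : lam * (F / lam) = F := Nat.mul_div_cancel' hdvd
  obtain ⟨E, hE⟩ := exists_equiv_prod_fst_eq φ (q := S / (F / lam)) fun x => by
    rw [Fintype.card_subtype]
    refine (Nat.div_eq_of_eq_mul_left x.pos (Nat.eq_of_mul_eq_mul_left hlam ?_)).symm
    rw [mul_left_comm, hF, hφcard x]
  refine ⟨finProdFinEquiv.trans (finCongr hF), _, E, fun s j k a hj => ?_⟩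
  rw [hstar, hE]
  convert hφrow s j k hj using 2
  ext
  simp [Nat.mod_eq_of_lt]

theorem theopm_general (K1 F1 Z1 S1 lam : ℕ)
    (hlam : 0 < lam)
    (hex : ∃ P : Fin F1 → Fin K1 → Option (Fin S1),
        IsPDA K1 F1 Z1 S1 P ∧ PDACondition1 K1 F1 Z1 S1 lam P) :
    ∀ m : ℕ, 0 < m →
      ∃ Q : Fin (lam * (F1 / lam) ^ m) → Fin (m * K1) →
            Option (Fin (S1 * (F1 / lam) ^ (m - 1))),
        IsPDA (m * K1) (lam * (F1 / lam) ^ m) (Z1 * (F1 / lam) ^ (m - 1))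
          (S1 * (F1 / lam) ^ (m - 1)) Q := by
  obtain ⟨P, hP, hcond⟩ := hex
  obtain ⟨eR, q, E, hstar⟩ := hcond.exists_equiv_prod_starRow hlam
  intro m hm
  have : NeZero m := ⟨hm.ne'⟩
  have hS : S1 = F1 / lam * q := by simpa using Fintype.card_congr E
  have eRows : Fin lam × (Fin m → Fin (F1 / lam)) ≃ Fin (lam * (F1 / lam) ^ m) :=
    Fintype.equivFinOfCardEq (by simp)
  have eSyms : Fin q × (Fin m → Fin (F1 / lam)) ≃ Fin (S1 * (F1 / lam) ^ (m - 1)) :=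
    Fintype.equivFinOfCardEq <| by
      obtain ⟨n, rfl⟩ := Nat.exists_eq_add_one.mpr hm
      simp only [Fintype.card_prod, Fintype.card_fin, Fintype.card_fun, hS, Nat.add_sub_cancel]
      ring
  have hbase : IsPDAOn Z1 fun r k => P (eR r) k := by
    simpa using ((isPDA_iff_isPDAOn P).mp hP).reindex eR.symm (Equiv.refl _) (Equiv.refl _)
  have hpow := (isPDAOn_productPDA (ι := Fin m) E hbase
    fun s j k a => hstar s (eR j) k a).reindex eRows finProdFinEquiv eSyms
  simp only [Fintype.card_fin] at hpow
  exact ⟨_, (isPDA_iff_isPDAOn _).mpr hpow⟩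

/-- Theorem 1: if there is a `(K1,F1,Z1,S1)` PDA satisfying Condition 1 with
parameter `lam`, then for every positive integer `m` there is an
`(m·K1, lam·(F1/lam)^m, Z1·(F1/lam)^(m-1), S1·(F1/lam)^(m-1))` PDA. -/
theorem theopm (K1 F1 Z1 S1 lam : ℕ)
    (hK1 : 0 < K1) (hF1 : 0 < F1) (hZ1 : 0 < Z1) (hS1 : 0 < S1) (hlam : 0 < lam)
    (hZF : Z1 < F1)
    (hex : ∃ P : Fin F1 → Fin K1 → Option (Fin S1),
        IsPDA K1 F1 Z1 S1 P ∧ PDACondition1 K1 F1 Z1 S1 lam P) :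
    ∀ m : ℕ, 0 < m →
      ∃ Q : Fin (lam * (F1 / lam) ^ m) → Fin (m * K1) →
            Option (Fin (S1 * (F1 / lam) ^ (m - 1))),
        IsPDA (m * K1) (lam * (F1 / lam) ^ m) (Z1 * (F1 / lam) ^ (m - 1))
          (S1 * (F1 / lam) ^ (m - 1)) Q :=
  theopm_general K1 F1 Z1 S1 lam hlam hex
end

section
/- Let K1, F1, Z1, S1 be positive integers with Z1 < F1 such that g = K1(F1−Z1)/S1 is an integer with g ≥ 2, and suppose there exists a g-regular (K1,F1,Z1,S1) placement delivery array in which every row contains the same number of stars (Condition 2). Then for every integer m ≥ 2 there exists an m(g−1)-regular (m·K1, (g−1)·F1^m, (g−1)·Z1·F1^{m−1}, g·S1·F1^{m−1}) placement delivery array. -/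
/-!
Every row of the base array `P` has the same number `n` of filled cells, so a filled cell is
determined by its row and its position `c < n` in that row, and double counting filled cells
gives `F₁ n = g S₁`. The new array has rows `(f, e)` with `f : [m] → [F₁]`, `e < g - 1`, columns
`(i, k)` with `i < m`, `k < K₁`, and symbols `(r, c)` with `r : [m] → [F₁]`, `c < n`. Its entry is
a star iff `P (f i) k` is; otherwise, if the `e`-th other occurrence of the symbol `P (f i) k`
sits in row `j` at position `c`, the entry is `(f[i ↦ j], c)`. The occurrences of `(r, c)` in
column block `i` correspond to the `g - 1` cells sharing the base symbol of the cell at position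
`c` of row `r i`, which gives `m (g - 1)` occurrences, and the exchange condition of the new array
reduces to that of `P` for two cells carrying the same base symbol.
-/

open Function

theorem Nat.card_subtype_eq_card_filter {α : Type*} [Fintype α] (p : α → Prop)
    [DecidablePred p] : Nat.card {x // p x} = (Finset.univ.filter p).card := by
  rw [Nat.card_eq_fintype_card, Fintype.card_subtype]

theorem Nat.card_subtype_ne_and_add_one {α : Type*} [Finite α] {p : α → Prop} {a : α}
    (ha : p a) : Nat.card {x // x ≠ a ∧ p x} + 1 = Nat.card {x // p x} := by
  have := Set.ncard_sdiff_singleton_add_one (s := {x | p x}) ha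
  have hs : ({x | p x} \ {a} : Set α) = {x | x ≠ a ∧ p x} := by ext; simp [and_comm]
  rwa [hs, ← Nat.card_coe_set_eq, ← Nat.card_coe_set_eq] at this

theorem Nat.card_subtype_apply {ι α : Type*} [Fintype ι] [DecidableEq ι] (i : ι) (p : α → Prop) :
    Nat.card {f : ι → α // p (f i)} = Nat.card {a // p a} * Nat.card α ^ (Nat.card ι - 1) := by
  have e : {f : ι → α // p (f i)} ≃ {a // p a} × ({j // j ≠ i} → α) :=
    ((Equiv.piSplitAt i fun _ => α).subtypeEquiv (q := fun x => p x.1) fun f => Iff.rfl).trans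
      Equiv.prodSubtypeFstEquivSubtypeProd
  rw [Nat.card_congr e, Nat.card_prod, Nat.card_fun]
  simp [Nat.card_eq_fintype_card, Fintype.card_subtype_compl]

section RegularPDA

variable {R C T : Type*}

/-- (C1), `g`-regularity and (C3) for an array indexed by arbitrary types; (C2) follows from
regularity when `0 < g`. -/
structure IsRegularPDA (P : R → C → Option T) (Z g : ℕ) : Prop where
  card_none : ∀ k, Nat.card {j // P j k = none} = Z
  card_some : ∀ s, Nat.card {x : R × C // P x.1 x.2 = some s} = g
  exchange : ∀ (j1 j2 : R) (k1 k2 : C) (s : T), P j1 k1 = some s → P j2 k2 = some s →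
    (j1, k1) ≠ (j2, k2) → P j1 k2 = none ∧ P j2 k1 = none

namespace IsRegularPDA

variable {P : R → C → Option T} {Z g : ℕ}

theorem reindex {R' C' T' : Type*} (hP : IsRegularPDA P Z g) (eR : R' ≃ R) (eC : C' ≃ C)
    (eT : T ≃ T') : IsRegularPDA (fun j k => (P (eR j) (eC k)).map eT) Z g where
  card_none k := by
    rw [← hP.card_none (eC k)]
    exact Nat.card_congr (eR.subtypeEquiv fun j => by simp)
  card_some s := by
    rw [← hP.card_some (eT.symm s)]
    exact Nat.card_congr ((eR.prodCongr eC).subtypeEquiv fun x => by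
      simp [Option.map_eq_some_iff, ← Equiv.eq_symm_apply])
  exchange j1 j2 k1 k2 s h1 h2 hne := by
    simp only [Option.map_eq_some_iff, ← Equiv.eq_symm_apply, exists_eq_right,
      Option.map_eq_none_iff] at h1 h2 ⊢
    exact hP.exchange _ _ _ _ _ h1 h2 (by simpa using hne)

theorem card_ne_none [Fintype T] [Finite R] [Finite C] (hP : IsRegularPDA P Z g) :
    Nat.card {x : R × C // P x.1 x.2 ≠ none} = Nat.card T * g := by
  let π : {p : T × (R × C) // P p.2.1 p.2.2 = some p.1} → {x : R × C // P x.1 x.2 ≠ none} :=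
    fun p => ⟨p.1.2, by simp [p.2]⟩
  have hπ : Bijective π := by
    refine ⟨fun p q hpq => ?_, fun x => ?_⟩
    · have h2 : p.1.2 = q.1.2 := congrArg Subtype.val hpq
      have h1 : p.1.1 = q.1.1 := Option.some_injective _ (p.2.symm.trans (h2 ▸ q.2))
      exact Subtype.ext (Prod.ext h1 h2)
    · obtain ⟨s, hs⟩ := Option.ne_none_iff_exists'.1 x.2
      exact ⟨⟨(s, x.1), hs⟩, rfl⟩
  rw [← Nat.card_eq_of_bijective π hπ,
    Nat.card_congr (Equiv.subtypeProdEquivSigmaSubtype fun s (x : R × C) => P x.1 x.2 = some s),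
    Nat.card_sigma]
  simp [hP.card_some]

section Fin

variable {K F S : ℕ} {P : Fin F → Fin K → Option (Fin S)}

theorem of_isPDA (hP : IsPDA K F Z S P) (hg : PDARegular K F S g P) : IsRegularPDA P Z g where
  card_none k := by rw [Nat.card_subtype_eq_card_filter, hP.1 k]
  card_some s := by rw [Nat.card_subtype_eq_card_filter, hg s]
  exchange := hP.2.2

theorem isPDA (hP : IsRegularPDA P Z g) (hg : 0 < g) : IsPDA K F Z S P := by
  refine ⟨fun k => ?_, fun s => ?_, hP.exchange⟩
  · rw [← Nat.card_subtype_eq_card_filter, hP.card_none k]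
  · have : Nonempty {x : Fin F × Fin K // P x.1 x.2 = some s} :=
      (Nat.card_pos_iff.1 (hP.card_some s ▸ hg)).1
    obtain ⟨⟨⟨j, k⟩, h⟩⟩ := this
    exact ⟨j, k, h⟩

theorem pdaRegular (hP : IsRegularPDA P Z g) : PDARegular K F S g P := fun s => by
  rw [← Nat.card_subtype_eq_card_filter, hP.card_some s]

end Fin

theorem exists_fin [Finite R] [Finite C] [Finite T] (hP : IsRegularPDA P Z g) (hg : 0 < g)
    {F K S : ℕ} (hF : Nat.card R = F) (hK : Nat.card C = K) (hS : Nat.card T = S) :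
    ∃ Q : Fin F → Fin K → Option (Fin S), IsPDA K F Z S Q ∧ PDARegular K F S g Q := by
  subst hF hK hS
  have hQ := hP.reindex (Finite.equivFin R).symm (Finite.equivFin C).symm (Finite.equivFin T)
  exact ⟨_, hQ.isPDA hg, hQ.pdaRegular⟩

end IsRegularPDA

end RegularPDA

theorem PDACondition2.exists_card_ne_none {K F S : ℕ} {P : Fin F → Fin K → Option (Fin S)}
    (hP : PDACondition2 K F S P) : ∃ n, ∀ j, Nat.card {k // P j k ≠ none} = n := by
  rcases isEmpty_or_nonempty (Fin F) with hF | ⟨⟨j₀⟩⟩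
  · exact ⟨0, isEmptyElim⟩
  refine ⟨Nat.card {k // P j₀ k ≠ none}, fun j => ?_⟩
  simp only [ne_eq, Nat.card_eq_fintype_card]
  rw [Fintype.card_subtype_compl, Fintype.card_subtype_compl, Fintype.card_subtype,
    Fintype.card_subtype, hP j j₀]

/-- `partner x` numbers the other occurrences of the symbol in the filled cell `x`, and `coord`
numbers the filled cells row by row. -/
structure CellNumbering {R C T : Type*} (P : R → C → Option T) (d n : ℕ) where
  partner (x : R × C) : P x.1 x.2 ≠ none → Fin d ≃ {y : R × C // y ≠ x ∧ P y.1 y.2 = P x.1 x.2}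
  coord : {x : R × C // P x.1 x.2 ≠ none} ≃ R × Fin n
  coord_fst (x : {x : R × C // P x.1 x.2 ≠ none}) : (coord x).1 = x.1.1

namespace CellNumbering

variable {R C T : Type*} {P : R → C → Option T} {d n : ℕ}

theorem nonempty [Finite R] [Finite C]
    (hsome : ∀ s, Nat.card {x : R × C // P x.1 x.2 = some s} = d + 1)
    (hrow : ∀ j, Nat.card {k // P j k ≠ none} = n) : Nonempty (CellNumbering P d n) := by
  have hpartner (x : R × C) (hx : P x.1 x.2 ≠ none) :
      Nat.card {y : R × C // y ≠ x ∧ P y.1 y.2 = P x.1 x.2} = d := by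
    obtain ⟨s, hs⟩ := Option.ne_none_iff_exists'.1 hx
    have := Nat.card_subtype_ne_and_add_one (p := fun y : R × C => P y.1 y.2 = P x.1 x.2) rfl
    rw [hs, hsome s] at this
    simpa [hs] using this
  exact ⟨{
    partner x hx := (Finite.equivFinOfCardEq (hpartner x hx)).symm
    coord := (Equiv.subtypeProdEquivSigmaSubtype fun j k => P j k ≠ none).trans <|
      (Equiv.sigmaCongrRight fun j => Finite.equivFinOfCardEq (hrow j)).trans <|
      Equiv.sigmaEquivProd R (Fin n)
    coord_fst _ := rfl }⟩

theorem card_ne_none [Finite R] (E : CellNumbering P d n) :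
    Nat.card {x : R × C // P x.1 x.2 ≠ none} = Nat.card R * n := by
  rw [Nat.card_congr E.coord, Nat.card_prod, Nat.card_eq_fintype_card (α := Fin n),
    Fintype.card_fin]

variable (E : CellNumbering P d n)

def cell (p : R × Fin n) : R × C := (E.coord.symm p).1

theorem coord_eq_iff {x : {x : R × C // P x.1 x.2 ≠ none}} {p : R × Fin n} :
    E.coord x = p ↔ x.1 = E.cell p := by
  rw [← Equiv.eq_symm_apply, Subtype.ext_iff, cell]

theorem cell_fst (p : R × Fin n) : (E.cell p).1 = p.1 := by
  have := E.coord_fst (E.coord.symm p)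
  rw [Equiv.apply_symm_apply] at this
  exact this.symm

theorem cell_ne_none (p : R × Fin n) : P (E.cell p).1 (E.cell p).2 ≠ none := (E.coord.symm p).2

def lift (m : ℕ) (row : (Fin m → R) × Fin d) (col : Fin m × C) : Option ((Fin m → R) × Fin n) :=
  if h : P (row.1 col.1) col.2 = none then none
  else
    let y := E.partner (row.1 col.1, col.2) h row.2
    let z := E.coord ⟨y, y.2.2.trans_ne h⟩
    some (update row.1 col.1 z.1, z.2)

variable {E} {m : ℕ}

theorem lift_eq_none_iff {f : Fin m → R} {e : Fin d} {i : Fin m} {k : C} :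
    E.lift m (f, e) (i, k) = none ↔ P (f i) k = none := by
  unfold lift; split_ifs <;> simp_all

theorem lift_eq_some_iff {f r : Fin m → R} {e : Fin d} {i : Fin m} {k : C} {c : Fin n} :
    E.lift m (f, e) (i, k) = some (r, c) ↔
      (∀ i' ≠ i, f i' = r i') ∧ ∃ h, (E.partner (f i, k) h e).1 = E.cell (r i, c) := by
  unfold lift
  by_cases h : P (f i) k = none
  · simp [h]
  have hz := E.coord_eq_iff (x := ⟨_, (E.partner (f i, k) h e).2.2.trans_ne h⟩) (p := (r i, c))
  dsimp only at hz
  rw [dif_neg h, exists_prop_of_true h, ← hz]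
  simp only [Option.some_inj, Prod.ext_iff, update_eq_iff]
  tauto

theorem partner_of_lift_eq_some {f r : Fin m → R} {e : Fin d} {i : Fin m} {k : C} {c : Fin n}
    (h : E.lift m (f, e) (i, k) = some (r, c)) :
    E.cell (r i, c) ≠ (f i, k) ∧ P (E.cell (r i, c)).1 (E.cell (r i, c)).2 = P (f i) k := by
  obtain ⟨-, hx, hy⟩ := lift_eq_some_iff.1 h
  exact hy ▸ (E.partner _ hx e).2

theorem eq_of_lift_eq_some {f₁ f₂ r : Fin m → R} {e₁ e₂ : Fin d} {i : Fin m} {k : C}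
    {c : Fin n} (h₁ : E.lift m (f₁, e₁) (i, k) = some (r, c))
    (h₂ : E.lift m (f₂, e₂) (i, k) = some (r, c)) (hf : f₁ i = f₂ i) : f₁ = f₂ ∧ e₁ = e₂ := by
  obtain ⟨hoff₁, hx₁, hy₁⟩ := lift_eq_some_iff.1 h₁
  obtain ⟨hoff₂, hx₂, hy₂⟩ := lift_eq_some_iff.1 h₂
  obtain rfl : f₁ = f₂ := funext fun i' =>
    if hi : i' = i then hi ▸ hf else (hoff₁ i' hi).trans (hoff₂ i' hi).symm
  exact ⟨rfl, (E.partner _ hx₁).injective (Subtype.ext (hy₁.trans hy₂.symm))⟩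

theorem lift_eq_none_of_eq_some {Z g : ℕ} (hP : IsRegularPDA P Z g) {f₁ f₂ r : Fin m → R}
    {e₁ e₂ : Fin d} {i₁ i₂ : Fin m} {k₁ k₂ : C} {c : Fin n}
    (h₁ : E.lift m (f₁, e₁) (i₁, k₁) = some (r, c)) (h₂ : E.lift m (f₂, e₂) (i₂, k₂) = some (r, c))
    (hne : ((f₁, e₁), (i₁, k₁)) ≠ ((f₂, e₂), (i₂, k₂))) : P (f₁ i₂) k₂ = none := by
  obtain ⟨s, hs⟩ := Option.ne_none_iff_exists'.1 (lift_eq_some_iff.1 h₂).2.1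
  have hy₂ := E.partner_of_lift_eq_some h₂
  obtain ⟨w, hw_row, hw_ne, hw⟩ :
      ∃ w : R × C, w.1 = f₁ i₂ ∧ w ≠ (f₂ i₂, k₂) ∧ P w.1 w.2 = some s := by
    by_cases hi : i₁ = i₂
    · subst hi
      have hy₁ := E.partner_of_lift_eq_some h₁
      refine ⟨(f₁ i₁, k₁), rfl, fun hx => hne ?_, hy₁.2.symm.trans (hy₂.2.trans hs)⟩
      obtain ⟨hf, rfl⟩ := Prod.ext_iff.1 hx
      obtain ⟨rfl, rfl⟩ := E.eq_of_lift_eq_some h₁ h₂ hf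
      rfl
    · have hrow := (lift_eq_some_iff.1 h₁).1 i₂ (Ne.symm hi)
      exact ⟨E.cell (r i₂, c), (E.cell_fst _).trans hrow.symm, hy₂.1, hy₂.2.trans hs⟩
  rw [← hw_row]
  exact (hP.exchange _ _ _ _ s hw hs hw_ne).1

theorem card_lift_eq_some (r : Fin m → R) (c : Fin n) :
    Nat.card {x : ((Fin m → R) × Fin d) × (Fin m × C) // E.lift m x.1 x.2 = some (r, c)} =
      m * d := by
  let π : {x : ((Fin m → R) × Fin d) × (Fin m × C) // E.lift m x.1 x.2 = some (r, c)} →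
      {p : Fin m × (R × C) // p.2 ≠ E.cell (r p.1, c) ∧
        P p.2.1 p.2.2 = P (E.cell (r p.1, c)).1 (E.cell (r p.1, c)).2} := fun x =>
    ⟨(x.1.2.1, (x.1.1.1 x.1.2.1, x.1.2.2)),
      (E.partner_of_lift_eq_some x.2).1.symm, (E.partner_of_lift_eq_some x.2).2.symm⟩
  have hπ : Bijective π := by
    refine ⟨?_, ?_⟩
    · rintro ⟨⟨⟨f, e⟩, i, k⟩, h⟩ ⟨⟨⟨f', e'⟩, i', k'⟩, h'⟩ hff'
      simp only [π, Subtype.mk.injEq, Prod.mk.injEq] at hff'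
      obtain ⟨rfl, hf, rfl⟩ := hff'
      obtain ⟨rfl, rfl⟩ := E.eq_of_lift_eq_some h h' hf
      rfl
    · rintro ⟨⟨i, j, k⟩, hne, hx⟩
      have hfill : P j k ≠ none := hx.trans_ne (E.cell_ne_none _)
      let e := (E.partner (j, k) hfill).symm ⟨E.cell (r i, c), hne.symm, hx.symm⟩
      have h : E.lift m (update r i j, e) (i, k) = some (r, c) := by
        refine lift_eq_some_iff.2 ⟨fun i' hi' => update_of_ne hi' _ _, ?_⟩
        rw [update_self]
        exact ⟨hfill, by simp [e]⟩
      exact ⟨⟨((update r i j, e), (i, k)), h⟩, by simp [π]⟩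
  rw [Nat.card_eq_of_bijective π hπ, Nat.card_congr <|
    (Equiv.subtypeProdEquivSigmaSubtype fun i (x : R × C) =>
      x ≠ E.cell (r i, c) ∧ P x.1 x.2 = P (E.cell (r i, c)).1 (E.cell (r i, c)).2).trans <|
    (Equiv.sigmaCongrRight fun i => (E.partner _ (E.cell_ne_none (r i, c))).symm).trans <|
    Equiv.sigmaEquivProd _ _]
  simp

theorem isRegularPDA_lift [Finite R] {Z g : ℕ} (hP : IsRegularPDA P Z g) (m : ℕ) :
    IsRegularPDA (E.lift m) (d * Z * Nat.card R ^ (m - 1)) (m * d) where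
  card_none := by
    rintro ⟨i, k⟩
    have e : {x : (Fin m → R) × Fin d // E.lift m x (i, k) = none} ≃
        {f : Fin m → R // P (f i) k = none} × Fin d :=
      (Equiv.subtypeEquivRight fun x => lift_eq_none_iff).trans
        (@Equiv.prodSubtypeFstEquivSubtypeProd (Fin m → R) (Fin d) fun f => P (f i) k = none)
    rw [Nat.card_congr e, Nat.card_prod, Nat.card_subtype_apply i (fun j => P j k = none),
      hP.card_none k]
    simp only [Nat.card_eq_fintype_card, Fintype.card_fin]
    ring
  card_some := fun ⟨r, c⟩ => E.card_lift_eq_some r c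
  exchange := by
    rintro ⟨f₁, e₁⟩ ⟨f₂, e₂⟩ ⟨i₁, k₁⟩ ⟨i₂, k₂⟩ ⟨r, c⟩ h₁ h₂ hne
    rw [lift_eq_none_iff, lift_eq_none_iff]
    exact ⟨E.lift_eq_none_of_eq_some hP h₁ h₂ hne, E.lift_eq_none_of_eq_some hP h₂ h₁ hne.symm⟩

end CellNumbering

theorem theopkm_general (K1 F1 Z1 S1 g : ℕ)
    (hg : 2 ≤ g)
    (hex : ∃ P : Fin F1 → Fin K1 → Option (Fin S1),
        IsPDA K1 F1 Z1 S1 P ∧ PDARegular K1 F1 S1 g P ∧ PDACondition2 K1 F1 S1 P) :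
    ∀ m : ℕ, 2 ≤ m →
      ∃ Q : Fin ((g - 1) * F1 ^ m) → Fin (m * K1) →
            Option (Fin (g * S1 * F1 ^ (m - 1))),
        IsPDA (m * K1) ((g - 1) * F1 ^ m) ((g - 1) * Z1 * F1 ^ (m - 1))
          (g * S1 * F1 ^ (m - 1)) Q ∧
        PDARegular (m * K1) ((g - 1) * F1 ^ m) (g * S1 * F1 ^ (m - 1)) (m * (g - 1)) Q := by
  intro m hm
  obtain ⟨P, hPDA, hreg, hrow⟩ := hex
  obtain ⟨d, rfl⟩ : ∃ d, g = d + 1 := ⟨g - 1, by omega⟩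
  obtain ⟨m', rfl⟩ : ∃ m', m = m' + 1 := ⟨m - 1, by omega⟩
  have hP := IsRegularPDA.of_isPDA hPDA hreg
  obtain ⟨n, hn⟩ := hrow.exists_card_ne_none
  obtain ⟨E⟩ := CellNumbering.nonempty hP.card_some hn
  have hFn : F1 * n = S1 * (d + 1) := by
    simpa using E.card_ne_none.symm.trans hP.card_ne_none
  have hQ : IsRegularPDA (E.lift (m' + 1)) ((d + 1 - 1) * Z1 * F1 ^ (m' + 1 - 1))
      ((m' + 1) * (d + 1 - 1)) := by
    simpa using E.isRegularPDA_lift hP (m' + 1)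
  refine hQ.exists_fin (Nat.mul_pos m'.succ_pos (by omega)) ?_ ?_ ?_
  · simp [mul_comm]
  · simp
  · simp only [Nat.card_eq_fintype_card, Fintype.card_prod, Fintype.card_fun, Fintype.card_fin]
    rw [add_tsub_cancel_right, pow_succ, mul_assoc, hFn]
    ring

/-- Theorem 2: if there is a `g`-regular `(K1,F1,Z1,S1)` PDA (with
`g = K1(F1-Z1)/S1 ≥ 2`) in which every row has the same number of stars (Condition 2), then
for any integer `m ≥ 2` there is an `m(g-1)`-regular
`(m·K1, (g-1)·F1^m, (g-1)·Z1·F1^(m-1), g·S1·F1^(m-1))` PDA. -/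
theorem theopkm (K1 F1 Z1 S1 g : ℕ)
    (hK1 : 0 < K1) (hF1 : 0 < F1) (hZ1 : 0 < Z1) (hS1 : 0 < S1)
    (hZF : Z1 < F1) (hg : 2 ≤ g) (hgdef : g * S1 = K1 * (F1 - Z1))
    (hex : ∃ P : Fin F1 → Fin K1 → Option (Fin S1),
        IsPDA K1 F1 Z1 S1 P ∧ PDARegular K1 F1 S1 g P ∧ PDACondition2 K1 F1 S1 P) :
    ∀ m : ℕ, 2 ≤ m →
      ∃ Q : Fin ((g - 1) * F1 ^ m) → Fin (m * K1) →
            Option (Fin (g * S1 * F1 ^ (m - 1))),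
        IsPDA (m * K1) ((g - 1) * F1 ^ m) ((g - 1) * Z1 * F1 ^ (m - 1))
          (g * S1 * F1 ^ (m - 1)) Q ∧
        PDARegular (m * K1) ((g - 1) * F1 ^ m) (g * S1 * F1 ^ (m - 1)) (m * (g - 1)) Q :=
  theopkm_general K1 F1 Z1 S1 g hg hex
end

section
/- Let P1 be a (K1,F1,Z1,S1) placement delivery array with Z1 < F1 satisfying Condition 1 with parameter λ, witnessed by the map φ, and for j∈[1:F1/λ] let B_j = φ^{-1}(j) (each of size λ·S1/F1), with B_j[μ] denoting the μ-th smallest element of B_j. For an integer m ≥ 2, define the array P_m with row index set F = ∪_{i∈[1:λ]} [(i−1)F1/λ+1 : i·F1/λ]^m and column index set [1:m]×[1:K1], whose entry at row f=(f_1,…,f_m) and column (δ,b) is: * if P1(f_δ,b)=*; otherwise, writing s=P1(f_δ,b), l=φ(s), and μ for the rank of s in B_l, the entry is the vector e∈[1:S1]^m with e_δ=s and e_h = B_{<f_h>_{F1/λ}}[μ] for every h≠δ. Then P_m is an (m·K1, λ·(F1/λ)^m, Z1·(F1/λ)^{m−1}, S1·(F1/λ)^{m−1}) PDA; explicitly: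 every column of P_m contains exactly Z1·(F1/λ)^{m−1} stars, exactly S1·(F1/λ)^{m−1} distinct non-star vectors occur in P_m, and whenever two distinct cells of P_m carry the same non-star vector, the two cells lie in different rows and different columns and the entries of P_m at the two crossing positions (row of the first cell with column of the second, and row of the second with column of the first) are both *. -/
/-- The row index set of Construction 1 (0-based): vectors `f ∈ [1:F1]^m` all of whose
coordinates lie in the same block `[(i-1)·n + 1 : i·n]` of length `n = F1/λ`; 0-based this
says that all the quotients `(f h) / n` coincide. -/
abbrev PDARow (m F1 n : ℕ) :=
  {f : Fin m → Fin F1 // ∀ h h' : Fin m, (f h).val / n = (f h').val / n}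

open Finset

namespace Finset

variable {α : Type*} [LinearOrder α]

theorem card_filter_lt_orderEmbOfFin (A : Finset α) (i : Fin #A) :
    #(A.filter (· < A.orderEmbOfFin rfl i)) = i := by
  have hfilter : A.filter (· < A.orderEmbOfFin rfl i) =
      (Iio i).map (A.orderEmbOfFin rfl).toEmbedding := by
    ext y
    simp only [mem_filter, mem_map, mem_Iio, RelEmbedding.coe_toEmbedding]
    constructor
    · rintro ⟨hy, hlt⟩
      obtain ⟨j, rfl⟩ : y ∈ Set.range (A.orderEmbOfFin rfl) := by
        rwa [range_orderEmbOfFin]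
      exact ⟨j, (OrderEmbedding.lt_iff_lt _).1 hlt, rfl⟩
    · rintro ⟨j, hj, rfl⟩
      exact ⟨orderEmbOfFin_mem _ _ _, (OrderEmbedding.lt_iff_lt _).2 hj⟩
  rw [hfilter, card_map, Fin.card_Iio]

theorem sort_getD_eq_orderEmbOfFin (A : Finset α) {i : ℕ} (hi : i < #A) (d : α) :
    A.sort.getD i d = A.orderEmbOfFin rfl ⟨i, hi⟩ :=
  List.getD_eq_getElem _ _ (by rwa [length_sort])

theorem sort_getD_mem (A : Finset α) {i : ℕ} (hi : i < #A) (d : α) : A.sort.getD i d ∈ A := by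
  rw [sort_getD_eq_orderEmbOfFin A hi]
  exact orderEmbOfFin_mem _ _ _

theorem card_filter_lt_sort_getD (A : Finset α) {i : ℕ} (hi : i < #A) (d : α) :
    #(A.filter (· < A.sort.getD i d)) = i := by
  rw [sort_getD_eq_orderEmbOfFin A hi, card_filter_lt_orderEmbOfFin]

theorem sort_getD_card_filter_lt (A : Finset α) {x : α} (hx : x ∈ A) (d : α) :
    A.sort.getD #(A.filter (· < x)) d = x := by
  obtain ⟨i, rfl⟩ : x ∈ Set.range (A.orderEmbOfFin rfl) := by rwa [range_orderEmbOfFin]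
  rw [card_filter_lt_orderEmbOfFin, sort_getD_eq_orderEmbOfFin A i.isLt]

theorem card_filter_lt_lt_card (A : Finset α) {x : α} (hx : x ∈ A) : #(A.filter (· < x)) < #A :=
  card_lt_card (filter_ssubset.2 ⟨x, hx, lt_irrefl x⟩)

end Finset

theorem Fintype.card_eq_mul_of_card_fiber_eq {α β : Type*} [Fintype α] [Fintype β]
    [DecidableEq β] {φ : α → β} {q : ℕ} (hq : ∀ j, #{s | φ s = j} = q) :
    Fintype.card α = Fintype.card β * q := by
  rw [← card_univ, card_eq_sum_card_fiberwise (t := univ) (fun s _ => mem_univ (φ s))]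
  simp [hq]

theorem Nat.mul_div_add_lt {n F j r : ℕ} (hn : n ∣ F) (hj : j < F) (hr : r < n) :
    n * (j / n) + r < F :=
  calc n * (j / n) + r < n * (j / n + 1) := by rw [mul_add_one]; omega
    _ ≤ n * (F / n) := Nat.mul_le_mul_left _ (Nat.div_lt_div_of_lt_of_dvd hn hj)
    _ = F := Nat.mul_div_cancel' hn

theorem Nat.mul_add_div_of_lt {n a r : ℕ} (hr : r < n) : (n * a + r) / n = a := by
  rw [Nat.mul_add_div (by omega), Nat.div_eq_of_lt hr, add_zero]

section Fiber

variable {α β : Type*} [Fintype α] [LinearOrder α] [DecidableEq β] (φ : α → β)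

def fiberRank (s : α) : ℕ := #{s' | φ s' = φ s ∧ s' < s}

/-- The paper's `B_j[μ]`, with `μ` 0-based; the default `d` is returned only when `μ` is out
of range. -/
def fiberElem (d : α) (j : β) (μ : ℕ) : α := ({s' | φ s' = j} : Finset α).sort.getD μ d

variable {φ}

theorem fiberRank_eq_card_filter_lt (s : α) :
    fiberRank φ s = #(({s' | φ s' = φ s} : Finset α).filter (· < s)) := by
  rw [fiberRank, filter_filter]

theorem fiberRank_lt_card (s : α) : fiberRank φ s < #{s' | φ s' = φ s} := by
  rw [fiberRank_eq_card_filter_lt]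
  exact card_filter_lt_lt_card _ (by simp)

theorem fiberElem_fiberRank (d s : α) : fiberElem φ d (φ s) (fiberRank φ s) = s := by
  rw [fiberElem, fiberRank_eq_card_filter_lt]
  exact sort_getD_card_filter_lt _ (by simp) d

theorem apply_fiberElem {j : β} {μ : ℕ} (hμ : μ < #{s' | φ s' = j}) (d : α) :
    φ (fiberElem φ d j μ) = j :=
  (mem_filter.1 (sort_getD_mem _ hμ d)).2

theorem fiberRank_fiberElem {j : β} {μ : ℕ} (hμ : μ < #{s' | φ s' = j}) (d : α) :
    fiberRank φ (fiberElem φ d j μ) = μ := by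
  rw [fiberRank_eq_card_filter_lt, apply_fiberElem hμ]
  exact card_filter_lt_sort_getD _ hμ d

variable {q : ℕ}

theorem fiberRank_lt_card_of_card_fiber_eq (hq : ∀ j, #{s | φ s = j} = q) (s : α) (j : β) :
    fiberRank φ s < #{s' | φ s' = j} :=
  hq j ▸ hq (φ s) ▸ fiberRank_lt_card s

variable [Fintype β]

theorem card_filter_fiberRank_eq [Nonempty α] {ι : Type*} [Fintype ι] [DecidableEq ι] (i₀ : ι)
    (hq : ∀ j, #{s | φ s = j} = q) :
    #{e : ι → α | ∀ i, fiberRank φ (e i) = fiberRank φ (e i₀)} =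
      Fintype.card β ^ Fintype.card ι * q := by
  let d : α := Classical.arbitrary α
  rw [← Fintype.card_fun, ← card_univ, ← card_range q, ← card_product]
  refine card_nbij' (fun e => (φ ∘ e, fiberRank φ (e i₀)))
    (fun p i => fiberElem φ d (p.1 i) p.2) ?_ ?_ ?_ ?_
  · intro e _
    simpa [hq] using fiberRank_lt_card_of_card_fiber_eq hq (e i₀) (φ (e i₀))
  · rintro ⟨p, μ⟩ hμ
    simp only [coe_product, Set.mem_prod, coe_range, Set.mem_Iio] at hμ
    simp only [coe_filter, Set.mem_ofPred_eq, mem_univ, true_and]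
    intro i
    rw [fiberRank_fiberElem ((hq _).symm ▸ hμ.2), fiberRank_fiberElem ((hq _).symm ▸ hμ.2)]
  · intro e he
    simp only [coe_filter, Set.mem_ofPred_eq, mem_univ, true_and] at he
    funext i
    simp only [Function.comp_apply, ← he i, fiberElem_fiberRank]
  · rintro ⟨p, μ⟩ hμ
    simp only [coe_product, Set.mem_prod, coe_range, Set.mem_Iio] at hμ
    have hμ' (i : ι) : μ < #{s | φ s = p i} := (hq _).symm ▸ hμ.2
    simp only [Prod.mk.injEq]
    exact ⟨funext fun i => apply_fiberElem (hμ' i) d, fiberRank_fiberElem (hμ' i₀) d⟩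

end Fiber

namespace PDARow

variable {m F n : ℕ}

theorem ext_of_mod {f g : PDARow m F n} (δ : Fin m) (hδ : f.1 δ = g.1 δ)
    (hmod : ∀ h, (f.1 h : ℕ) % n = g.1 h % n) : f = g := by
  refine Subtype.ext (funext fun h => Fin.ext ?_)
  rw [← Nat.div_add_mod (f.1 h : ℕ) n, ← Nat.div_add_mod (g.1 h : ℕ) n, f.2 h δ, g.2 h δ, hδ,
    hmod h]

def ofPivot (hn : n ∣ F) (δ : Fin m) (j : Fin F) (r : {h // h ≠ δ} → Fin n) : PDARow m F n :=
  ⟨fun h => if hh : h = δ then j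
      else ⟨n * (j / n) + r ⟨h, hh⟩, Nat.mul_div_add_lt hn j.isLt (r _).isLt⟩,
    fun h h' => by
      dsimp only
      split_ifs <;> simp only [Nat.mul_add_div_of_lt (Fin.isLt _)]⟩

theorem ofPivot_apply_self (hn : n ∣ F) (δ : Fin m) (j : Fin F) (r : {h // h ≠ δ} → Fin n) :
    (ofPivot hn δ j r).1 δ = j :=
  dif_pos rfl

theorem ofPivot_apply_mod (hn : n ∣ F) {δ : Fin m} (j : Fin F) (r : {h // h ≠ δ} → Fin n)
    {h : Fin m} (hh : h ≠ δ) : ((ofPivot hn δ j r).1 h : ℕ) % n = r ⟨h, hh⟩ := by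
  simp only [ofPivot, dif_neg hh, Nat.mul_add_mod, Nat.mod_eq_of_lt (r _).isLt]

variable [NeZero n]

def pivotEquiv (hn : n ∣ F) (δ : Fin m) : PDARow m F n ≃ Fin F × ({h // h ≠ δ} → Fin n) where
  toFun f := (f.1 δ, fun h => Fin.ofNat n (f.1 h))
  invFun p := ofPivot hn δ p.1 p.2
  left_inv f := by
    refine ext_of_mod δ (ofPivot_apply_self ..) fun h => ?_
    rcases eq_or_ne h δ with rfl | hh
    · rw [ofPivot_apply_self]
    · rw [ofPivot_apply_mod _ _ _ hh, Fin.val_ofNat]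
  right_inv p := by
    refine Prod.ext (ofPivot_apply_self hn ..) (funext fun h => Fin.ext ?_)
    rw [Fin.val_ofNat, ofPivot_apply_mod _ _ _ h.2]

theorem card_filter_apply_eq (hn : n ∣ F) (δ : Fin m) (p : Fin F → Prop) [DecidablePred p] :
    #{f : PDARow m F n | p (f.1 δ)} = #{j | p j} * n ^ (m - 1) := by
  rw [card_equiv (pivotEquiv hn δ) (t := ({j | p j} : Finset (Fin F)) ×ˢ univ)
      (by simp [pivotEquiv]), card_product, card_univ, Fintype.card_fun, Fintype.card_fin]
  simp only [ne_eq, Fintype.card_subtype_compl, Fintype.card_fin, Fintype.card_unique]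

end PDARow

section Construction

variable {K F S m n : ℕ} [NeZero n]

def liftEntry (φ : Fin S → Fin n) (d : Fin S) (f : Fin m → Fin F) (δ : Fin m) (s : Fin S) :
    Fin m → Fin S :=
  fun h => if h = δ then s else fiberElem φ d (Fin.ofNat n (f h)) (fiberRank φ s)

/-- The array `P_m` of Construction 1. -/
def liftArray (P : Fin F → Fin K → Option (Fin S)) (φ : Fin S → Fin n) (d : Fin S)
    (f : PDARow m F n) (c : Fin m × Fin K) : Option (Fin m → Fin S) :=
  (P (f.1 c.1) c.2).map (liftEntry φ d f.1 c.1)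

variable {P : Fin F → Fin K → Option (Fin S)} {φ : Fin S → Fin n} {d : Fin S} {q : ℕ}

theorem liftEntry_self (f : Fin m → Fin F) (δ : Fin m) (s : Fin S) :
    liftEntry φ d f δ s δ = s :=
  if_pos rfl

theorem apply_liftEntry_of_ne (hq : ∀ j, #{s | φ s = j} = q) (f : Fin m → Fin F) (s : Fin S)
    {δ h : Fin m} (hh : h ≠ δ) : φ (liftEntry φ d f δ s h) = Fin.ofNat n (f h) := by
  rw [liftEntry, if_neg hh, apply_fiberElem (fiberRank_lt_card_of_card_fiber_eq hq s _)]

theorem fiberRank_liftEntry (hq : ∀ j, #{s | φ s = j} = q) (f : Fin m → Fin F) (δ : Fin m)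
    (s : Fin S) (h : Fin m) : fiberRank φ (liftEntry φ d f δ s h) = fiberRank φ s := by
  rcases eq_or_ne h δ with rfl | hh
  · rw [liftEntry_self]
  · rw [liftEntry, if_neg hh, fiberRank_fiberElem (fiberRank_lt_card_of_card_fiber_eq hq s _)]

theorem liftEntry_eq_getD_sort (f : Fin m → Fin F) (δ : Fin m) (s : Fin S) :
    liftEntry φ d f δ s = fun h => if h = δ then s else
      ((univ.filter fun s' => (φ s').val = (f h).val % n).sort (· ≤ ·)).getD
        #{s' | φ s' = φ s ∧ s' < s} d := by
  have hfiber (j : Fin F) : univ.filter (fun s' => φ s' = Fin.ofNat n j) =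
      univ.filter fun s' => (φ s').val = j.val % n := by
    simp only [Fin.ext_iff, Fin.val_ofNat]
  unfold liftEntry fiberElem fiberRank
  simp only [hfiber]

theorem liftArray_eq_none_iff {f : PDARow m F n} {δ : Fin m} {b : Fin K} :
    liftArray P φ d f (δ, b) = none ↔ P (f.1 δ) b = none :=
  Option.map_eq_none_iff

theorem liftArray_eq_some_iff {f : PDARow m F n} {δ : Fin m} {b : Fin K} {e : Fin m → Fin S} :
    liftArray P φ d f (δ, b) = some e ↔ ∃ s, P (f.1 δ) b = some s ∧ liftEntry φ d f.1 δ s = e :=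
  Option.map_eq_some_iff

theorem card_filter_liftArray_eq_none {Z : ℕ} (hcol : ∀ k, #{j | P j k = none} = Z)
    (hn : n ∣ F) (c : Fin m × Fin K) :
    #{f : PDARow m F n | liftArray P φ d f c = none} = Z * n ^ (m - 1) := by
  obtain ⟨δ, b⟩ := c
  simp only [liftArray_eq_none_iff]
  rw [PDARow.card_filter_apply_eq hn δ (P · b = none), hcol]

theorem exists_liftArray_eq_some_iff (hocc : ∀ s, ∃ j k, P j k = some s) (hn : n ∣ F)
    (hq : ∀ j, #{s | φ s = j} = q) (i₀ : Fin m) (e : Fin m → Fin S) :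
    (∃ f c, liftArray P φ d f c = some e) ↔ ∀ h, fiberRank φ (e h) = fiberRank φ (e i₀) := by
  constructor
  · rintro ⟨f, ⟨δ, b⟩, hfe⟩ h
    obtain ⟨s, -, rfl⟩ := liftArray_eq_some_iff.1 hfe
    rw [fiberRank_liftEntry hq, fiberRank_liftEntry hq]
  · intro hrank
    obtain ⟨j, b, hj⟩ := hocc (e i₀)
    let f := PDARow.ofPivot hn i₀ j fun h => φ (e h)
    refine ⟨f, (i₀, b), liftArray_eq_some_iff.2
      ⟨e i₀, by rwa [PDARow.ofPivot_apply_self], funext fun h => ?_⟩⟩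
    rcases eq_or_ne h i₀ with rfl | hh
    · exact liftEntry_self ..
    · have hres : Fin.ofNat n (f.1 h) = φ (e h) :=
        Fin.ext (by rw [Fin.val_ofNat, PDARow.ofPivot_apply_mod hn _ _ hh])
      rw [liftEntry, if_neg hh, hres, ← hrank h, fiberElem_fiberRank]

theorem card_liftArray_symbols (hm : 0 < m) (hocc : ∀ s, ∃ j k, P j k = some s) (hn : n ∣ F)
    (hq : ∀ j, #{s | φ s = j} = q) :
    #{e : Fin m → Fin S | ∃ f c, liftArray P φ d f c = some e} = S * n ^ (m - 1) := by
  have : Nonempty (Fin S) := ⟨d⟩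
  have hS : S = n * q := by simpa using Fintype.card_eq_mul_of_card_fiber_eq hq
  calc #{e : Fin m → Fin S | ∃ f c, liftArray P φ d f c = some e}
      = #{e : Fin m → Fin S | ∀ h, fiberRank φ (e h) = fiberRank φ (e ⟨0, hm⟩)} := by
        simp only [exists_liftArray_eq_some_iff hocc hn hq ⟨0, hm⟩]
    _ = n ^ m * q := by
      convert card_filter_fiberRank_eq (⟨0, hm⟩ : Fin m) hq <;> rw [Fintype.card_fin]
    _ = S * n ^ (m - 1) := by rw [hS, ← pow_sub_one_mul hm.ne']; ring

theorem liftArray_eq_none_of_eq_some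
    (hcross : ∀ (j1 j2 : Fin F) (k1 k2 : Fin K) (s : Fin S),
      P j1 k1 = some s → P j2 k2 = some s → (j1, k1) ≠ (j2, k2) →
      P j1 k2 = none ∧ P j2 k1 = none)
    (hstarRows : ∀ s j k (j' : Fin F), P j k = some s → Fin.ofNat n j' = φ s → P j' k = none)
    (hq : ∀ j, #{s | φ s = j} = q) {f1 f2 : PDARow m F n} {c1 c2 : Fin m × Fin K}
    {e : Fin m → Fin S} (h1 : liftArray P φ d f1 c1 = some e)
    (h2 : liftArray P φ d f2 c2 = some e) (hne : (f1, c1) ≠ (f2, c2)) :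
    liftArray P φ d f1 c2 = none := by
  obtain ⟨δ1, b1⟩ := c1
  obtain ⟨δ2, b2⟩ := c2
  obtain ⟨s1, hs1, rfl⟩ := liftArray_eq_some_iff.1 h1
  obtain ⟨s2, hs2, he⟩ := liftArray_eq_some_iff.1 h2
  rw [liftArray_eq_none_iff]
  rcases eq_or_ne δ1 δ2 with rfl | hδ
  · obtain rfl : s2 = s1 := by simpa only [liftEntry_self] using congrFun he δ1
    refine (hcross _ _ b1 b2 s2 hs1 hs2 fun hcell => hne ?_).1
    obtain ⟨hrow, rfl⟩ := Prod.mk.inj hcell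
    suffices f1 = f2 by rw [this]
    refine PDARow.ext_of_mod δ1 hrow fun h => ?_
    rcases eq_or_ne h δ1 with rfl | hh
    · rw [hrow]
    · have hres := congrArg φ (congrFun he h)
      rw [apply_liftEntry_of_ne hq _ _ hh, apply_liftEntry_of_ne hq _ _ hh] at hres
      simpa only [Fin.ext_iff, Fin.val_ofNat] using hres.symm
  · refine hstarRows s2 _ b2 _ hs2 ?_
    rw [← apply_liftEntry_of_ne hq f1.1 s1 hδ.symm, ← he, liftEntry_self]

end Construction

/-- Everything is 0-based: the paper's `<j>_n ∈ [1:n]` becomes `j % n ∈ [0:n-1]`, and `B_j[μ]`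
becomes the entry of the sorted fibre at the 0-based rank `|{s' ∈ B_{φ(s)} : s' < s}|`. -/
theorem lem_theorem1_PDA_general (K1 F1 Z1 S1 lam m : ℕ)
    (hS1 : 0 < S1)
    (hm : 2 ≤ m)
    (P1 : Fin F1 → Fin K1 → Option (Fin S1))
    (hPDA : IsPDA K1 F1 Z1 S1 P1)
    -- Condition 1 with parameter `lam`, witnessed by `φ`:
    (hdF : lam ∣ F1)
    (hper : ∀ (j : Fin F1) (k : Fin K1),
      P1 j k = none ↔
        P1 ⟨j.val % (F1 / lam), Nat.lt_of_le_of_lt (Nat.mod_le _ _) j.isLt⟩ k = none)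
    (φ : Fin S1 → Fin (F1 / lam))
    (hstar : ∀ (s : Fin S1) (j : Fin F1) (k : Fin K1),
      P1 j k = some s → P1 (Fin.castLE (Nat.div_le_self F1 lam) (φ s)) k = none)
    (hfib : ∀ jj : Fin (F1 / lam),
      (Finset.univ.filter fun s : Fin S1 => φ s = jj).card * F1 = lam * S1)
    -- the array `P_m` of Construction 1:
    (Pm : PDARow m F1 (F1 / lam) → Fin m × Fin K1 → Option (Fin m → Fin S1))
    (hPm : ∀ (f : PDARow m F1 (F1 / lam)) (δ : Fin m) (b : Fin K1),
      (P1 (f.1 δ) b = none → Pm f (δ, b) = none) ∧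
      (∀ s : Fin S1, P1 (f.1 δ) b = some s →
        Pm f (δ, b) = some (fun h => if h = δ then s else
          (((Finset.univ.filter fun s' : Fin S1 =>
                (φ s').val = (f.1 h).val % (F1 / lam)).sort (· ≤ ·)).getD
            ((Finset.univ.filter fun s' : Fin S1 => φ s' = φ s ∧ s' < s).card)
            ⟨0, hS1⟩)))) :
    -- C1: each column of `P_m` has exactly `Z1·(F1/lam)^(m-1)` stars
    (∀ c : Fin m × Fin K1,
      (Finset.univ.filter fun f : PDARow m F1 (F1 / lam) => Pm f c = none).card =
        Z1 * (F1 / lam) ^ (m - 1)) ∧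
    -- exactly `S1·(F1/lam)^(m-1)` distinct non-star vectors occur in `P_m`
    ((Finset.univ.filter fun e : Fin m → Fin S1 =>
        ∃ f c, Pm f c = some e).card = S1 * (F1 / lam) ^ (m - 1)) ∧
    -- C3 for `P_m`
    (∀ (f1 f2 : PDARow m F1 (F1 / lam)) (c1 c2 : Fin m × Fin K1) (e : Fin m → Fin S1),
      Pm f1 c1 = some e → Pm f2 c2 = some e → (f1, c1) ≠ (f2, c2) →
      f1 ≠ f2 ∧ c1 ≠ c2 ∧ Pm f1 c2 = none ∧ Pm f2 c1 = none) := by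
  obtain ⟨hcol, hocc, hcross⟩ := hPDA
  let d : Fin S1 := ⟨0, hS1⟩
  have : NeZero (F1 / lam) := ⟨(φ d).pos.ne'⟩
  have hF1 : 0 < F1 := (φ d).pos.trans_le (Nat.div_le_self F1 lam)
  have hq (j) : #{s | φ s = j} = #{s | φ s = φ d} :=
    Nat.eq_of_mul_eq_mul_right hF1 ((hfib j).trans (hfib (φ d)).symm)
  have hstarRows (s j k) (j' : Fin F1) (hs : P1 j k = some s) (hj' : Fin.ofNat _ j' = φ s) :
      P1 j' k = none := by
    rw [hper]
    convert hstar s j k hs using 2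
    exact Fin.ext (by rw [Fin.val_castLE, ← hj', Fin.val_ofNat])
  obtain rfl : Pm = liftArray P1 φ d := by
    funext f ⟨δ, b⟩
    cases hP : P1 (f.1 δ) b with
    | none => rw [(hPm f δ b).1 hP, liftArray_eq_none_iff.2 hP]
    | some s => rw [(hPm f δ b).2 s hP, liftArray_eq_some_iff.2 ⟨s, hP, rfl⟩,
        liftEntry_eq_getD_sort]
  have hdvd : F1 / lam ∣ F1 := Nat.div_dvd_of_dvd hdF
  refine ⟨card_filter_liftArray_eq_none hcol hdvd, card_liftArray_symbols (by omega) hocc hdvd hq,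
    fun f1 f2 c1 c2 e h1 h2 hne => ?_⟩
  have h12 := liftArray_eq_none_of_eq_some hcross hstarRows hq h1 h2 hne
  refine ⟨fun hf => ?_, fun hc => ?_, h12,
    liftArray_eq_none_of_eq_some hcross hstarRows hq h2 h1 hne.symm⟩
  · subst hf
    exact Option.some_ne_none e (h2.symm.trans h12)
  · subst hc
    exact Option.some_ne_none e (h1.symm.trans h12)

/-- Lemma 2: the array `P_m` of Construction 1 built from a `(K1,F1,Z1,S1)` PDA
`P1` satisfying Condition 1 with parameter `lam` (witnessed by `φ`, with fibers
`B_j = φ⁻¹(j)`) is an `(m·K1, lam·(F1/lam)^m, Z1·(F1/lam)^(m-1), S1·(F1/lam)^(m-1))` PDA.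
Everything is 0-based: the paper's `<j>_n ∈ [1:n]` becomes `j % n ∈ [0:n-1]`, the paper's μ-th
smallest element `B_j[μ]` (1-based μ) becomes the entry of the sorted list of the fiber at the
0-based rank `|{s' ∈ B_{φ(s)} : s' < s}|` of `s` in its fiber.  The entry of `P_m` at row `f`
and column `(δ,b)` is `*` iff `P1(f_δ,b) = *`, and otherwise the vector `e` with `e_δ = s` and
`e_h = B_{<f_h>_n}[μ]` for `h ≠ δ`, where `s = P1(f_δ,b)` and `μ` is the rank of `s` in
`B_{φ(s)}`.  Conclusions: every column of `P_m` has exactly `Z1·(F1/lam)^(m-1)` stars, exactly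
`S1·(F1/lam)^(m-1)` distinct non-star vectors occur, and equal non-star vectors in distinct
cells lie in different rows and different columns with both crossing entries equal to `*`. -/
theorem lem_theorem1_PDA (K1 F1 Z1 S1 lam m : ℕ)
    (hK1 : 0 < K1) (hF1 : 0 < F1) (hZ1 : 0 < Z1) (hS1 : 0 < S1) (hlam : 0 < lam)
    (hZF : Z1 < F1) (hm : 2 ≤ m)
    (P1 : Fin F1 → Fin K1 → Option (Fin S1))
    (hPDA : IsPDA K1 F1 Z1 S1 P1)
    -- Condition 1 with parameter `lam`, witnessed by `φ`:
    (hdF : lam ∣ F1) (hdZ : lam ∣ Z1)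
    (hper : ∀ (j : Fin F1) (k : Fin K1),
      P1 j k = none ↔
        P1 ⟨j.val % (F1 / lam), Nat.lt_of_le_of_lt (Nat.mod_le _ _) j.isLt⟩ k = none)
    (φ : Fin S1 → Fin (F1 / lam))
    (hstar : ∀ (s : Fin S1) (j : Fin F1) (k : Fin K1),
      P1 j k = some s → P1 (Fin.castLE (Nat.div_le_self F1 lam) (φ s)) k = none)
    (hfib : ∀ jj : Fin (F1 / lam),
      (Finset.univ.filter fun s : Fin S1 => φ s = jj).card * F1 = lam * S1)
    -- the array `P_m` of Construction 1:
    (Pm : PDARow m F1 (F1 / lam) → Fin m × Fin K1 → Option (Fin m → Fin S1))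
    (hPm : ∀ (f : PDARow m F1 (F1 / lam)) (δ : Fin m) (b : Fin K1),
      (P1 (f.1 δ) b = none → Pm f (δ, b) = none) ∧
      (∀ s : Fin S1, P1 (f.1 δ) b = some s →
        Pm f (δ, b) = some (fun h => if h = δ then s else
          (((Finset.univ.filter fun s' : Fin S1 =>
                (φ s').val = (f.1 h).val % (F1 / lam)).sort (· ≤ ·)).getD
            ((Finset.univ.filter fun s' : Fin S1 => φ s' = φ s ∧ s' < s).card)
            ⟨0, hS1⟩)))) :
    -- C1: each column of `P_m` has exactly `Z1·(F1/lam)^(m-1)` stars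
    (∀ c : Fin m × Fin K1,
      (Finset.univ.filter fun f : PDARow m F1 (F1 / lam) => Pm f c = none).card =
        Z1 * (F1 / lam) ^ (m - 1)) ∧
    -- exactly `S1·(F1/lam)^(m-1)` distinct non-star vectors occur in `P_m`
    ((Finset.univ.filter fun e : Fin m → Fin S1 =>
        ∃ f c, Pm f c = some e).card = S1 * (F1 / lam) ^ (m - 1)) ∧
    -- C3 for `P_m`
    (∀ (f1 f2 : PDARow m F1 (F1 / lam)) (c1 c2 : Fin m × Fin K1) (e : Fin m → Fin S1),
      Pm f1 c1 = some e → Pm f2 c2 = some e → (f1, c1) ≠ (f2, c2) →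
      f1 ≠ f2 ∧ c1 ≠ c2 ∧ Pm f1 c2 = none ∧ Pm f2 c1 = none) :=
  lem_theorem1_PDA_general K1 F1 Z1 S1 lam m hS1 hm P1 hPDA hdF hper φ hstar hfib Pm hPm
end

section
/- Let H, b, r be positive integers with r < b and 2b ≤ H, and set a = b + r. Let P be the array whose rows are indexed by the b-element subsets B of [1:H], whose columns are indexed by the (b+r)-element subsets A of [1:H], with P(B,A) = ((A∪B)∖(A∩B), A∖B) if |A∩B| = r and P(B,A) = * otherwise. Then P satisfies Condition 1 with λ=1. Explicitly: (i) for every non-star value v = (D,C) occurring in P, and for every column A' in which v occurs, P(C,A') = * (the row C is a star row for v); and (ii) for every b-element subset B' of [1:H], the number of distinct non-star values occurring in P whose second component equals B' is binomial(H−b, b−r). -/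
/-- Proposition 1: the PDA of Yan et al. with `a = b + r` satisfies Condition 1
with `λ = 1`. Rows are the `b`-subsets `B ⊆ [1:H]`, columns the `(b+r)`-subsets `A ⊆ [1:H]`,
and `P(B,A) = ((A∪B)∖(A∩B), A∖B)` if `|A∩B| = r`, otherwise `*`.
(i) For every occurring non-star value `(D,C)` and every column `A'` in which it occurs, the
entry at row `C` and column `A'` is `*`.
(ii) For every `b`-subset `B'`, exactly `C(H-b, b-r)` distinct non-star values occurring in `P`
have second component `B'`. -/
theorem prostrong (H b r : ℕ) (hH : 0 < H) (hr : 0 < r) (hrb : r < b) (hbH : 2 * b ≤ H)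
    (P : {B : Finset (Fin H) // B.card = b} → {A : Finset (Fin H) // A.card = b + r} →
          Option (Finset (Fin H) × Finset (Fin H)))
    (hP : ∀ (B : {B : Finset (Fin H) // B.card = b})
        (A : {A : Finset (Fin H) // A.card = b + r}),
        P B A = if (A.1 ∩ B.1).card = r
          then some ((A.1 ∪ B.1) \ (A.1 ∩ B.1), A.1 \ B.1) else none) :
    (∀ (D C : Finset (Fin H)) (hC : C.card = b) (A' : {A : Finset (Fin H) // A.card = b + r}),
        (∃ B, P B A' = some (D, C)) → P ⟨C, hC⟩ A' = none) ∧
    (∀ B' : {B : Finset (Fin H) // B.card = b},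
        (Finset.univ.filter fun v : Finset (Fin H) × Finset (Fin H) =>
          (∃ B A, P B A = some v) ∧ v.2 = B'.1).card = (H - b).choose (b - r)) := by
  constructor
  · rintro D C hC A' ⟨B, hB⟩
    rw [hP] at hB ⊢
    by_cases h : (A'.1 ∩ B.1).card = r
    · simp only [h, if_pos, Option.some.injEq, Prod.mk.injEq] at hB
      obtain ⟨hD, hCeq⟩ := hB
      rw [if_neg]
      have hAC : A'.1 ∩ C = C := by
        rw [← hCeq]; ext x; simp
      rw [hAC, hC]
      omega
    · simp [h] at hB
  · intro B'
    have key : (Finset.univ.filter fun v : Finset (Fin H) × Finset (Fin H) =>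
          (∃ B A, P B A = some v) ∧ v.2 = B'.1)
        = (Finset.powersetCard (b - r) (B'.1)ᶜ).image (fun E => (B'.1 ∪ E, B'.1)) := by
      ext v
      simp only [Finset.mem_filter, Finset.mem_univ, true_and, Finset.mem_image,
        Finset.mem_powersetCard]
      constructor
      · rintro ⟨⟨B, A, hv⟩, hv2⟩
        rw [hP] at hv
        by_cases h : (A.1 ∩ B.1).card = r
        · simp only [h, if_pos, Option.some.injEq] at hv
          subst hv
          simp only at hv2
          refine ⟨B.1 \ A.1, ⟨?_, ?_⟩, ?_⟩
          · intro x hx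
            rw [Finset.mem_compl, ← hv2]
            simp only [Finset.mem_sdiff] at hx ⊢
            tauto
          · have h1 : B.1 \ A.1 = B.1 \ (A.1 ∩ B.1) := by
              ext x; simp
            rw [h1, Finset.card_sdiff_of_subset Finset.inter_subset_right, B.2, h]
          · rw [Prod.mk.injEq]
            refine ⟨?_, hv2.symm⟩
            rw [← hv2]
            ext x
            simp only [Finset.mem_union, Finset.mem_sdiff, Finset.mem_inter]
            tauto
        · simp [h] at hv
      · rintro ⟨E, ⟨hE, hEcard⟩, hv⟩
        have hdE : ∀ x, x ∈ E → x ∉ B'.1 := by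
          intro x hx; have := hE hx; rwa [Finset.mem_compl] at this
        have hdisj : Disjoint B'.1 E :=
          Finset.disjoint_left.mpr (fun x hx hx' => hdE x hx' hx)
        have hcard : r ≤ ((B'.1 ∪ E)ᶜ).card := by
          rw [Finset.card_compl, Finset.card_union_of_disjoint hdisj, B'.2, hEcard]
          simp only [Fintype.card_fin]
          omega
        obtain ⟨R, hR, hRcard⟩ := Finset.exists_subset_card_eq hcard
        have hdR : ∀ x, x ∈ R → x ∉ B'.1 ∧ x ∉ E := by
          intro x hx
          have := hR hx
          rw [Finset.mem_compl, Finset.mem_union] at this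
          tauto
        have hBcard : (E ∪ R).card = b := by
          rw [Finset.card_union_of_disjoint
            (Finset.disjoint_left.mpr (fun x hx hx' => (hdR x hx').2 hx)), hEcard, hRcard]
          omega
        have hAcard : (B'.1 ∪ R).card = b + r := by
          rw [Finset.card_union_of_disjoint
            (Finset.disjoint_left.mpr (fun x hx hx' => (hdR x hx').1 hx)), B'.2, hRcard]
        refine ⟨⟨⟨E ∪ R, hBcard⟩, ⟨B'.1 ∪ R, hAcard⟩, ?_⟩, by rw [← hv]⟩
        rw [hP]
        have hint : (B'.1 ∪ R) ∩ (E ∪ R) = R := by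
          ext x
          simp only [Finset.mem_inter, Finset.mem_union]
          constructor
          · rintro ⟨h1 | h1, h2 | h2⟩ <;>
              first
                | exact absurd h1 (hdE x h2)
                | exact absurd h1 ((hdR x h2).1)
                | exact h2
                | exact h1
          · intro hx; exact ⟨Or.inr hx, Or.inr hx⟩
        rw [hint, if_pos hRcard, ← hv, Option.some.injEq, Prod.mk.injEq]
        constructor
        · ext x
          have h1 := hdE x
          have h2 := hdR x
          simp only [Finset.mem_sdiff, Finset.mem_union]
          tauto
        · ext x
          have h1 := hdE x
          have h2 := hdR x
          simp only [Finset.mem_sdiff, Finset.mem_union]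
          tauto
    rw [key, Finset.card_image_of_injOn, Finset.card_powersetCard, Finset.card_compl, B'.2,
      Fintype.card_fin]
    intro E1 h1 E2 h2 heq
    simp only [Finset.mem_coe, Finset.mem_powersetCard] at h1 h2
    simp only [Prod.mk.injEq] at heq
    ext x
    have hx1 : x ∈ B'.1 ∪ E1 ↔ x ∈ B'.1 ∪ E2 := by rw [heq.1]
    simp only [Finset.mem_union] at hx1
    constructor
    · intro hx
      have := hx1.mp (Or.inr hx)
      rcases this with h | h
      · exact absurd h (by have := h1.1 hx; rwa [Finset.mem_compl] at this)
      · exact h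
    · intro hx
      have := hx1.mpr (Or.inr hx)
      rcases this with h | h
      · exact absurd h (by have := h2.1 hx; rwa [Finset.mem_compl] at this)
      · exact h
end

section
/- Let m, q, t be positive integers with 2 ≤ t < m and q ≥ 2. Let F = { f ∈ [1:q]^m : f_m = <Σ_{i=1}^{m−1} f_i>_q } be the row index set and let the columns be the pairs (T,b) with T = {δ_1 < … < δ_t} ⊆ [1:m] and b ∈ [1:q]^t. The cell at row f ∈ F and column (T,b) is a star if f_{δ_h} = b_h for some h ∈ [1:t]; otherwise it is non-star with label e(f,T,b) ∈ [1:q]^m defined by e_i = b_h if i = δ_h and e_i = f_i otherwise. Define φ : [1:q]^m → F by φ(e) = e if e ∈ F, and φ(e) = (e_1,…,e_{m−1}, <Σ_{i=1}^{m−1} e_i>_q) otherwise. Then: (i) for every non-star cell at (f,(T,b)) with label e, the cell at row φ(e) and column (T,b) is a star; and (ii) for every f' ∈ F, the number of pairs (e,n) such that e ∈ [1:q]^m, φ(e) = f', n is a positive integer, and some column contains at least n non-star cells with label e, equals (q−1)^t. -/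
/-!
Write `ε_i(x) = x + 1 ∈ ZMod q` for `i ≠ m` and `ε_m(x) = -(x + 1)`; then `f ∈ F` iff
`∑ i, ε_i(f_i) = 0`. Subtracting `ε(e)`, the rows whose cell in column `(T, e)` is non-star with
label `e` correspond to the vectors `x` with support exactly `T` and `∑ x = -∑ ε(e)`. Their number
depends on `T` only through `|T|` (permute the coordinates), and no column `(T, b)` with `|T| = t`
has more cells labelled `e`, so the multiplicity of `e` is this count for any fixed `T₀`.
The fibre of `φ` over `f' ∈ F` consists of the `q` vectors that agree with `f'` off the last
coordinate, and along it `-∑ ε(e)` takes every value of `ZMod q` once; summing the multiplicities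
therefore counts all `x` with support `T₀`, which gives `(q - 1)^t`. Part (i) holds because `T`
contains a coordinate other than the last one, and `φ` changes only the last coordinate.
-/

open scoped Classical

open Finset Function

lemma ncard_pairs_mem_range_le {γ α : Type*} [Fintype γ] {g : γ → α} (hg : Injective g)
    (N : α → ℕ) :
    {p : α × ℕ | (∃ v, g v = p.1) ∧ 1 ≤ p.2 ∧ p.2 ≤ N p.1}.ncard = ∑ v, N (g v) := by
  have : {p : α × ℕ | (∃ v, g v = p.1) ∧ 1 ≤ p.2 ∧ p.2 ≤ N p.1} =
      (fun x : Σ _ : γ, ℕ => (g x.1, x.2)) '' ↑(univ.sigma fun v => Icc 1 (N (g v))) := by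
    ext ⟨a, n⟩
    simp only [Set.mem_ofPred_eq, Set.mem_image, mem_coe, mem_sigma, mem_univ, mem_Icc,
      true_and, Sigma.exists, Prod.mk.injEq]
    constructor
    · rintro ⟨⟨v, rfl⟩, hn⟩
      exact ⟨v, n, hn, rfl, rfl⟩
    · rintro ⟨v, k, hk, rfl, rfl⟩
      exact ⟨⟨v, rfl⟩, hk⟩
  rw [this, Set.ncard_image_of_injective, Set.ncard_coe_finset, card_sigma]
  · simp
  · rintro ⟨v, n⟩ ⟨w, k⟩ h
    simp only [Prod.mk.injEq] at h
    obtain ⟨h1, rfl⟩ := h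
    cases hg h1
    rfl

section SupportSum

variable {ι G : Type*} [Fintype ι] [DecidableEq ι] [AddCommGroup G] [Fintype G] [DecidableEq G]

def supportSumCount (T : Finset ι) (s : G) : ℕ :=
  #{x : ι → G | (∀ i, x i ≠ 0 ↔ i ∈ T) ∧ ∑ i, x i = s}

lemma supportSumCount_eq_of_card_eq {T T' : Finset ι} (h : #T = #T') (s : G) :
    supportSumCount T s = supportSumCount T' s := by
  obtain ⟨σ, rfl⟩ := Equiv.Perm.exists_map_finset_eq T T' h
  refine card_nbij' (fun x => x ∘ σ.symm) (fun y => y ∘ σ) ?_ ?_ ?_ ?_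
  · intro x hx
    simp only [coe_filter, mem_univ, true_and, Set.mem_ofPred_eq] at hx ⊢
    refine ⟨fun i => ?_, hx.2 ▸ Equiv.sum_comp σ.symm x⟩
    simp [hx.1]
  · intro y hy
    simp only [coe_filter, mem_univ, true_and, Set.mem_ofPred_eq] at hy ⊢
    refine ⟨fun i => ?_, hy.2 ▸ Equiv.sum_comp σ y⟩
    simpa using hy.1 (σ i)
  · intro x _
    simp [comp_assoc]
  · intro y _
    simp [comp_assoc]

lemma card_filter_ne_zero_iff_mem (T : Finset ι) :
    #{x : ι → G | ∀ i, x i ≠ 0 ↔ i ∈ T} = (Fintype.card G - 1) ^ #T := by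
  have : ({x : ι → G | ∀ i, x i ≠ 0 ↔ i ∈ T} : Finset _) =
      Fintype.piFinset fun i => if i ∈ T then univ.erase 0 else {0} := by
    ext x
    simp only [mem_filter, mem_univ, true_and, Fintype.mem_piFinset]
    refine forall_congr' fun i => ?_
    split_ifs with hi <;> simp [hi]
  simp [this, apply_ite card, prod_ite_mem, card_erase_of_mem]

lemma sum_supportSumCount (T : Finset ι) :
    ∑ s : G, supportSumCount T s = (Fintype.card G - 1) ^ #T := by
  rw [← card_filter_ne_zero_iff_mem T, card_eq_sum_card_fiberwise (f := fun x : ι → G => ∑ i, x i)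
    (t := univ) (fun _ _ => mem_univ _)]
  simp only [supportSumCount, filter_filter]

lemma sum_supportSumCount_update {β : Type*} [Fintype β] (E : ι → β ≃ G) (e : ι → β) (L : ι)
    (T : Finset ι) :
    ∑ v, supportSumCount T (-∑ i, E i (update e L v i)) = (Fintype.card G - 1) ^ #T := by
  have hsum : ∀ v, ∑ i, E i (update e L v i) = E L v + ∑ i ∈ univ.erase L, E i (e i) := by
    intro v
    rw [← add_sum_erase _ _ (mem_univ L), update_self]
    congr 1
    exact sum_congr rfl fun i hi => by rw [update_of_ne (ne_of_mem_erase hi)]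
  have hbij : Bijective fun v => -∑ i, E i (update e L v i) := by
    simp only [hsum]
    exact neg_bijective.comp ((AddGroup.addRight_bijective _).comp (E L).bijective)
  rw [hbij.sum_comp (fun s => supportSumCount T s), sum_supportSumCount]

end SupportSum

section LabelCount

variable {ι β G : Type*} [Fintype ι] [DecidableEq ι] [Fintype β] [DecidableEq β]
  [AddCommGroup G] [Fintype G] [DecidableEq G]

noncomputable def labelCount (P : (ι → β) → Prop) (T : Finset ι) (b e : ι → β) : ℕ :=
  #{f | P f ∧ (∀ i ∈ T, f i ≠ b i) ∧ (fun i => if i ∈ T then b i else f i) = e}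

lemma labelCount_le_labelCount_self (P : (ι → β) → Prop) (T : Finset ι) (b e : ι → β) :
    labelCount P T b e ≤ labelCount P T e e := by
  refine card_le_card fun f hf => ?_
  simp only [mem_filter, mem_univ, true_and] at hf ⊢
  obtain ⟨hP, hne, rfl⟩ := hf
  refine ⟨hP, fun i hi => ?_, funext fun i => ?_⟩
  · simpa [hi] using hne i hi
  · split_ifs with hi <;> simp [hi]

lemma labelCount_self_eq_supportSumCount (E : ι → β ≃ G) {P : (ι → β) → Prop}
    (hP : ∀ f, P f ↔ ∑ i, E i (f i) = 0) (T : Finset ι) (e : ι → β) :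
    labelCount P T e e = supportSumCount T (-∑ i, E i (e i)) := by
  have hlabel : ∀ f : ι → β, (fun i => if i ∈ T then e i else f i) = e ↔ ∀ i ∉ T, f i = e i := by
    intro f
    simp only [funext_iff]
    exact forall_congr' fun i => by by_cases hi : i ∈ T <;> simp [hi]
  refine card_nbij' (fun f i => E i (f i) - E i (e i)) (fun x i => (E i).symm (x i + E i (e i)))
    ?_ ?_ ?_ ?_
  · intro f hf
    simp only [coe_filter, mem_univ, true_and, Set.mem_ofPred_eq, hP, hlabel] at hf ⊢
    obtain ⟨hsum, hT, hTc⟩ := hf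
    refine ⟨fun i => ?_, by rw [sum_sub_distrib, hsum, zero_sub]⟩
    by_cases hi : i ∈ T
    · simpa [hi, sub_eq_zero] using hT i hi
    · simp [hi, hTc i hi]
  · intro x hx
    simp only [coe_filter, mem_univ, true_and, Set.mem_ofPred_eq, hP, hlabel] at hx ⊢
    obtain ⟨hsupp, hsum⟩ := hx
    refine ⟨by simp [sum_add_distrib, hsum], fun i hi => ?_, fun i hi => ?_⟩
    · rw [Ne, Equiv.symm_apply_eq, add_eq_right]
      exact (hsupp i).2 hi
    · rw [Equiv.symm_apply_eq, add_eq_right]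
      exact not_not.1 fun h => hi ((hsupp i).1 h)
  · intro f _
    simp
  · intro x _
    simp

lemma exists_le_labelCount_iff (E : ι → β ≃ G) {P : (ι → β) → Prop}
    (hP : ∀ f, P f ↔ ∑ i, E i (f i) = 0) {T₀ : Finset ι} {t : ℕ} (hT₀ : #T₀ = t) (e : ι → β)
    (n : ℕ) : (∃ (T : Finset ι) (b : ι → β), #T = t ∧ n ≤ labelCount P T b e) ↔
      n ≤ labelCount P T₀ e e := by
  refine ⟨fun ⟨T, b, hT, hn⟩ => ?_, fun hn => ⟨T₀, e, hT₀, hn⟩⟩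
  rw [labelCount_self_eq_supportSumCount E hP,
    ← supportSumCount_eq_of_card_eq (hT.trans hT₀.symm), ← labelCount_self_eq_supportSumCount E hP]
  exact hn.trans (labelCount_le_labelCount_self P T b e)

end LabelCount

section LastCoordinate

variable {ι β : Type*} [DecidableEq ι] {P : (ι → β) → Prop} {L : ι} {c : (ι → β) → β}
  {phi : (ι → β) → ι → β}

lemma phi_eq_update (hP : ∀ f, P f ↔ f L = c f)
    (hphi : ∀ e, (P e → phi e = e) ∧ (¬P e → phi e = update e L (c e))) (e : ι → β) :
    phi e = update e L (c e) := by
  by_cases he : P e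
  · rw [(hphi e).1 he, ← (hP e).1 he, update_eq_self]
  · exact (hphi e).2 he

lemma phi_eq_iff_exists_update (hP : ∀ f, P f ↔ f L = c f)
    (hphi : ∀ e, (P e → phi e = e) ∧ (¬P e → phi e = update e L (c e)))
    (hc : ∀ e e', (∀ i ≠ L, e i = e' i) → c e = c e') {f' : ι → β} (hf' : P f') (e : ι → β) :
    phi e = f' ↔ ∃ v, update f' L v = e := by
  rw [phi_eq_update hP hphi]
  constructor
  · rintro rfl
    refine ⟨e L, funext fun i => ?_⟩
    by_cases hi : i = L
    · subst hi; simp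
    · simp [hi]
  · rintro ⟨v, rfl⟩
    rw [update_idem, hc _ f' fun i hi => update_of_ne hi _ _, ← (hP f').1 hf', update_eq_self]

end LastCoordinate

section OneBased

variable (q : ℕ)

lemma natCast_succ_injective [NeZero q] :
    Injective fun x : Fin q => (((x : ℕ) + 1 : ℕ) : ZMod q) := by
  intro x y h
  simp only [Nat.cast_add, Nat.cast_one, add_left_inj] at h
  have := congrArg ZMod.val h
  rw [ZMod.val_natCast, ZMod.val_natCast, Nat.mod_eq_of_lt x.2, Nat.mod_eq_of_lt y.2] at this
  exact Fin.ext this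

lemma add_one_eq_sub_one_mod_add_one_iff {a S : ℕ} (ha : a < q) (hS : 1 ≤ S) :
    a + 1 = (S - 1) % q + 1 ↔ ((a + 1 : ℕ) : ZMod q) = S := by
  obtain ⟨S, rfl⟩ : ∃ k, S = k + 1 := ⟨S - 1, by omega⟩
  rw [Nat.add_sub_cancel, add_left_inj]
  conv_lhs => rw [← Nat.mod_eq_of_lt ha]
  rw [← ZMod.natCast_eq_natCast_iff', Nat.cast_add, Nat.cast_add, Nat.cast_one, add_left_inj]

variable [NeZero q]

noncomputable def oneBasedCast : Fin q ≃ ZMod q :=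
  Equiv.ofBijective _ ((Fintype.bijective_iff_injective_and_card _).2
    ⟨natCast_succ_injective q, by simp⟩)

lemma oneBasedCast_apply (x : Fin q) : oneBasedCast q x = (((x : ℕ) + 1 : ℕ) : ZMod q) := rfl

noncomputable def signedOneBasedCast {ι : Type*} [DecidableEq ι] (L i : ι) : Fin q ≃ ZMod q :=
  if i = L then (oneBasedCast q).trans (Equiv.neg _) else oneBasedCast q

variable {q}

lemma sum_signedOneBasedCast_eq_zero_iff {ι : Type*} [Fintype ι] [DecidableEq ι]
    {L : ι} (hL : (univ.erase L).Nonempty) (f : ι → Fin q) :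
    ∑ i, signedOneBasedCast q L i (f i) = 0 ↔
      (f L : ℕ) + 1 = ((∑ i ∈ univ.erase L, ((f i : ℕ) + 1)) - 1) % q + 1 := by
  obtain ⟨j, hj⟩ := hL
  have hS : 1 ≤ ∑ i ∈ univ.erase L, ((f i : ℕ) + 1) :=
    le_trans (by omega) (single_le_sum (fun i _ => Nat.zero_le ((f i : ℕ) + 1)) hj)
  have hoff : ∀ i ∈ univ.erase L, signedOneBasedCast q L i (f i) = oneBasedCast q (f i) :=
    fun i hi => by simp [signedOneBasedCast, ne_of_mem_erase hi]
  rw [add_one_eq_sub_one_mod_add_one_iff q (f L).2 hS, Nat.cast_sum,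
    ← add_sum_erase _ (fun i => signedOneBasedCast q L i (f i)) (mem_univ L), sum_congr rfl hoff]
  simp only [signedOneBasedCast, if_pos, Equiv.trans_apply, Equiv.neg_apply, oneBasedCast_apply,
    neg_add_eq_zero]

end OneBased

/-- Proposition 2: the PDA of Construction 5 satisfies Condition 1 with `λ = 1`.
Vectors in `[1:q]^m` are encoded 0-based as `f : Fin m → Fin q` (the paper's value of
coordinate `i` is `(f i : ℕ) + 1`), the row set is
`F = {f : f_m = <Σ_{i<m} f_i>_q}`, encoded by the predicate `inF` below, and a column is a pair
`(T, b)` with `T : Finset (Fin m)`, `|T| = t`, `b : Fin m → Fin q` (only the values of `b` on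
`T` matter). The cell at `(f,(T,b))` is a star iff `f` agrees with `b` on some index of `T`;
otherwise its label is `e(f,T,b) = (fun i => if i ∈ T then b i else f i)`.  The map `φ` sends
`e` to `e` when `e ∈ F`, and otherwise corrects the last coordinate to `<Σ_{i<m} e_i>_q`
(0-based: `(Σ_{i<m}((e i)+1) - 1) % q`).
(i) For every non-star cell with label `e`, the cell at row `φ(e)` in the same column is a star.
(ii) For every `f' ∈ F`, the number of pairs `(e,n)` with `φ(e) = f'`, `n ≥ 1`, and some column
containing at least `n` non-star cells labelled `e`, equals `(q-1)^t`. -/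
theorem proPDAOA (m q t : ℕ) (ht : 2 ≤ t) (htm : t < m) (hq : 2 ≤ q)
    (inF : (Fin m → Fin q) → Prop)
    (hinF : ∀ f : Fin m → Fin q, inF f ↔
      ((f ⟨m - 1, by omega⟩ : ℕ) + 1 =
        ((∑ i ∈ Finset.univ.erase (⟨m - 1, by omega⟩ : Fin m), ((f i : ℕ) + 1)) - 1) % q + 1))
    (phi : (Fin m → Fin q) → (Fin m → Fin q))
    (hphi : ∀ e : Fin m → Fin q,
      (inF e → phi e = e) ∧
      (¬ inF e → phi e = Function.update e ⟨m - 1, by omega⟩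
        ⟨((∑ i ∈ Finset.univ.erase (⟨m - 1, by omega⟩ : Fin m), ((e i : ℕ) + 1)) - 1) % q,
          Nat.mod_lt _ (by omega)⟩)) :
    -- (i) the row `φ(e)` is a star row for every occurrence of the label `e`
    (∀ (f : Fin m → Fin q), inF f →
      ∀ (T : Finset (Fin m)), T.card = t →
      ∀ (b : Fin m → Fin q), (∀ i ∈ T, f i ≠ b i) →
        ∃ i ∈ T, phi (fun i => if i ∈ T then b i else f i) i = b i) ∧
    -- (ii) each fiber of `φ` over `F` collects exactly `(q-1)^t` distinct PDA symbols `(e,n)`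
    (∀ f' : Fin m → Fin q, inF f' →
      Set.ncard {p : (Fin m → Fin q) × ℕ |
        phi p.1 = f' ∧ 1 ≤ p.2 ∧
        ∃ (T : Finset (Fin m)) (b : Fin m → Fin q), T.card = t ∧
          p.2 ≤ (Finset.univ.filter fun f : Fin m → Fin q =>
            inF f ∧ (∀ i ∈ T, f i ≠ b i) ∧
              (fun i => if i ∈ T then b i else f i) = p.1).card} = (q - 1) ^ t) := by
  have : NeZero q := ⟨by omega⟩
  set L : Fin m := ⟨m - 1, by omega⟩
  set c : (Fin m → Fin q) → Fin q := fun e =>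
    ⟨((∑ i ∈ univ.erase L, ((e i : ℕ) + 1)) - 1) % q, Nat.mod_lt _ (by omega)⟩
  have hP : ∀ f, inF f ↔ f L = c f := fun f => (hinF f).trans (by simp [c, Fin.ext_iff])
  have hc : ∀ e e', (∀ i ≠ L, e i = e' i) → c e = c e' := fun e e' h => by
    simp only [c, Fin.mk.injEq]
    rw [sum_congr rfl fun i hi => by rw [h i (ne_of_mem_erase hi)]]
  have hE : ∀ f, inF f ↔ ∑ i, signedOneBasedCast q L i (f i) = 0 := fun f =>
    (hinF f).trans (sum_signedOneBasedCast_eq_zero_iff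
      ⟨⟨0, by omega⟩, by simp [L, Fin.ext_iff]; omega⟩ f).symm
  refine ⟨fun f _ T hT b _ => ?_, fun f' hf' => ?_⟩
  · obtain ⟨i, hi, hiL⟩ := T.exists_mem_ne (by omega) L
    exact ⟨i, hi, by rw [phi_eq_update hP hphi, update_of_ne hiL, if_pos hi]⟩
  · obtain ⟨T₀, -, hT₀⟩ := exists_subset_card_eq (s := (univ : Finset (Fin m)))
      (show t ≤ #univ by simp; omega)
    have hset : {p : (Fin m → Fin q) × ℕ | phi p.1 = f' ∧ 1 ≤ p.2 ∧
        ∃ (T : Finset (Fin m)) (b : Fin m → Fin q), T.card = t ∧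
          p.2 ≤ (Finset.univ.filter fun f : Fin m → Fin q =>
            inF f ∧ (∀ i ∈ T, f i ≠ b i) ∧ (fun i => if i ∈ T then b i else f i) = p.1).card} =
        {p | (∃ v, update f' L v = p.1) ∧ 1 ≤ p.2 ∧ p.2 ≤ labelCount inF T₀ p.1 p.1} := by
      ext ⟨e, n⟩
      simp only [Set.mem_ofPred_eq, phi_eq_iff_exists_update hP hphi hc hf']
      rw [← exists_le_labelCount_iff _ hE hT₀]
      -- the two filters differ only in their `Decidable` instances
      unfold labelCount
      congr!
    rw [hset, ncard_pairs_mem_range_le (update_injective f' L) fun e => labelCount inF T₀ e e]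
    simp only [labelCount_self_eq_supportSumCount _ hE]
    rw [sum_supportSumCount_update, ZMod.card, hT₀]
end

section
/- Let P be a g-regular (K1,F1,Z1,S1) placement delivery array, where g = K1(F1−Z1)/S1 is an integer with g ≥ 2 and every row of P contains the same number of stars (Condition 2). For each s ∈ [1:S1], let (j_{s,1},k_{s,1}),…,(j_{s,g},k_{s,g}) be the g cells of P that contain s, ordered so that k_{s,1} < k_{s,2} < … < k_{s,g}. Define the (g−1)F1 × K1 array P1 by: P1(j,k) = * if P(<j>_{F1},k) = *; and if P(<j>_{F1},k) = s with (<j>_{F1},k) = (j_{s,η},k_{s,η}) and i = ⌈j/F1⌉, then P1(j,k) = g(s−1) + <η+i−1>_g. Then P1 is a (g−1)-regular (K1,(g−1)F1,(g−1)Z1,g·S1) placement delivery array satisfying Condition 1 with parameter λ = g−1. -/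
/-- The 0-based value `g·(s-1) + <η+i-1>_g` of Construction (10), where in 0-based form
`<η+i-1>_g - 1 = (c + J/F1) % g` with `c` the number of earlier columns containing `s`. -/
def mkVal (g S1 : ℕ) (hg : 0 < g) (s : Fin S1) (x : ℕ) : Fin (g * S1) :=
  ⟨g * s.val + x % g, by
    have h1 : x % g < g := Nat.mod_lt _ hg
    have h2 : s.val + 1 ≤ S1 := s.isLt
    calc g * s.val + x % g < g * s.val + g := by omega
      _ = g * (s.val + 1) := by ring
      _ ≤ g * S1 := Nat.mul_le_mul (le_refl g) h2⟩

open Finset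

section Cells

variable {K F S : ℕ}

def pdaCells (P : Fin F → Fin K → Option (Fin S)) (s : Fin S) : Finset (Fin F × Fin K) :=
  univ.filter fun jk => P jk.1 jk.2 = some s

def pdaRank (P : Fin F → Fin K → Option (Fin S)) (s : Fin S) (k : Fin K) : ℕ :=
  (univ.filter fun jk : Fin F × Fin K => P jk.1 jk.2 = some s ∧ jk.2 < k).card

variable {P : Fin F → Fin K → Option (Fin S)} {s : Fin S}

lemma mem_pdaCells {jk : Fin F × Fin K} : jk ∈ pdaCells P s ↔ P jk.1 jk.2 = some s := by
  simp [pdaCells]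

lemma pdaRank_eq_card_filter (k : Fin K) :
    pdaRank P s k = ((pdaCells P s).filter fun jk => jk.2 < k).card := by
  simp only [pdaRank, pdaCells, filter_filter]

lemma pdaRank_lt_pdaRank {j : Fin F} {k k' : Fin K} (h : P j k = some s) (hk : k < k') :
    pdaRank P s k < pdaRank P s k' := by
  simp only [pdaRank_eq_card_filter]
  refine card_lt_card ((ssubset_iff_of_subset fun jk hjk => ?_).2 ⟨(j, k), ?_, ?_⟩)
  · rw [mem_filter] at hjk ⊢
    exact ⟨hjk.1, hjk.2.trans hk⟩
  · exact mem_filter.2 ⟨mem_pdaCells.2 h, hk⟩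
  · simp

lemma pdaRank_lt_card {jk : Fin F × Fin K} (h : jk ∈ pdaCells P s) :
    pdaRank P s jk.2 < (pdaCells P s).card := by
  rw [pdaRank_eq_card_filter]
  exact card_lt_card (filter_ssubset.2 ⟨jk, h, lt_irrefl _⟩)

lemma PDARegular.card_pdaCells {g : ℕ} (hreg : PDARegular K F S g P) (s : Fin S) :
    (pdaCells P s).card = g :=
  hreg s

variable {Z : ℕ}

lemma IsPDA.eq_of_mem_pdaCells_of_snd_eq (hP : IsPDA K F Z S P) {a b : Fin F × Fin K}
    (ha : a ∈ pdaCells P s) (hb : b ∈ pdaCells P s) (hab : a.2 = b.2) : a = b := by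
  rw [mem_pdaCells] at ha hb
  by_contra hne
  have := (hP.2.2 a.1 b.1 a.2 b.2 s ha hb hne).2
  simp [hab, hb] at this

lemma IsPDA.injOn_pdaRank (hP : IsPDA K F Z S P) (s : Fin S) :
    Set.InjOn (fun jk : Fin F × Fin K => pdaRank P s jk.2) (pdaCells P s) := by
  intro a ha b hb hab
  rcases lt_trichotomy a.2 b.2 with h | h | h
  · exact absurd hab (pdaRank_lt_pdaRank (mem_pdaCells.1 ha) h).ne
  · exact hP.eq_of_mem_pdaCells_of_snd_eq ha hb h
  · exact absurd hab (pdaRank_lt_pdaRank (mem_pdaCells.1 hb) h).ne'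

lemma IsPDA.exists_pdaRank_eq (hP : IsPDA K F Z S P) {r : ℕ} (hr : r < (pdaCells P s).card) :
    ∃ jk ∈ pdaCells P s, pdaRank P s jk.2 = r := by
  have himage : (pdaCells P s).image (fun jk => pdaRank P s jk.2) = range (pdaCells P s).card := by
    refine eq_of_subset_of_card_le (fun ρ hρ => ?_) ?_
    · obtain ⟨jk, hjk, rfl⟩ := mem_image.1 hρ
      exact mem_range.2 (pdaRank_lt_card hjk)
    · rw [card_range, card_image_of_injOn (hP.injOn_pdaRank s)]
  have hmem : r ∈ (pdaCells P s).image (fun jk => pdaRank P s jk.2) := by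
    rw [himage]
    exact mem_range.2 hr
  simpa using hmem

lemma IsPDA.card_filter_ne_none_mul (hP : IsPDA K F Z S P) (hc2 : PDACondition2 K F S P)
    (j : Fin F) : (univ.filter fun k => P j k ≠ none).card * F = K * (F - Z) := by
  set z := (univ.filter fun k => P j k = none).card
  have hstars : z * F = K * Z := by
    calc z * F = ∑ j' : Fin F, (univ.filter fun k => P j' k = none).card := by
          simp [hc2 _ j, z, mul_comm]
      _ = ∑ k : Fin K, (univ.filter fun j' => P j' k = none).card := by
          simp only [card_filter]
          exact sum_comm
      _ = K * Z := by simp [hP.1]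
  have hsplit : z + (univ.filter fun k => P j k ≠ none).card = K := by
    simpa using card_filter_add_card_filter_not (s := univ) (fun k => P j k = none)
  rw [show (univ.filter fun k => P j k ≠ none).card = K - z by omega, Nat.sub_mul, hstars,
    Nat.mul_sub]

end Cells

lemma card_filter_modNat {m n : ℕ} (p : Fin n → Prop) [DecidablePred p] :
    (univ.filter fun J : Fin (m * n) => p J.modNat).card = m * (univ.filter p).card := by
  calc _ = ((univ : Finset (Fin m)) ×ˢ univ.filter p).card :=
        card_equiv finProdFinEquiv.symm (by simp)
    _ = m * (univ.filter p).card := by rw [card_product, card_univ, Fintype.card_fin]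

lemma divNat_modNat_finProdFinEquiv {m n : ℕ} (i : Fin m) (j : Fin n) :
    (finProdFinEquiv (i, j)).divNat = i ∧ (finProdFinEquiv (i, j)).modNat = j := by
  have h := finProdFinEquiv.symm_apply_apply (i, j)
  rwa [finProdFinEquiv_symm_apply, Prod.mk.injEq] at h

section MkVal

variable {g S : ℕ} {hg : 0 < g}

lemma mkVal_eq_mkVal_iff {s s' : Fin S} {x x' : ℕ} :
    mkVal g S hg s x = mkVal g S hg s' x' ↔ s = s' ∧ x % g = x' % g := by
  have hdiv : ∀ (s : Fin S) x, (mkVal g S hg s x : ℕ) / g = s := fun s x => by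
    simp [mkVal, Nat.mul_add_div hg, Nat.div_eq_of_lt (Nat.mod_lt x hg)]
  have hmod : ∀ (s : Fin S) x, (mkVal g S hg s x : ℕ) % g = x % g := fun s x => by
    simp [mkVal]
  constructor
  · intro h
    exact ⟨Fin.ext (by rw [← hdiv s x, ← hdiv s' x', h]), by rw [← hmod s x, ← hmod s' x', h]⟩
  · rintro ⟨rfl, hx⟩
    exact Fin.ext (by simp [mkVal, hx])

lemma exists_mkVal_eq (hg : 0 < g) (t : Fin (g * S)) : ∃ s x, mkVal g S hg s x = t :=
  ⟨⟨t / g, Nat.div_lt_of_lt_mul t.isLt⟩, t, Fin.ext (Nat.div_add_mod t g)⟩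

end MkVal

lemma add_sub_add_mod {g i : ℕ} (hi : i ≤ g) (x : ℕ) : ((x + (g - i)) % g + i) % g = x % g := by
  rw [Nat.mod_add_mod, add_assoc, Nat.sub_add_cancel hi, Nat.add_mod_right]

lemma succ_mod_add_mod_ne {g i : ℕ} (hi : i + 1 < g) (x : ℕ) : ((x + 1) % g + i) % g ≠ x % g := by
  rw [Nat.mod_add_mod, add_assoc]
  intro h
  have h0 : i + 1 ≡ 0 [MOD g] := Nat.ModEq.add_left_cancel' x (by rwa [add_zero, add_comm i])
  have := h0.eq_of_lt_of_lt hi (by omega)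
  omega

lemma add_pred_succ_mod {g ρ : ℕ} (hρ : ρ < g) : (ρ + (g - 1) + 1) % g = ρ := by
  rw [add_assoc, Nat.sub_add_cancel (by omega), Nat.add_mod_right, Nat.mod_eq_of_lt hρ]

section CyclicLift

variable {K F S Z g : ℕ} {hg : 0 < g} {P : Fin F → Fin K → Option (Fin S)}

variable (g hg P) in
/-- The array `P1` of the paper: `J.divNat` is `i - 1`, and at a cell of `s` in column `k`,
`pdaRank P s k` is `η - 1`. -/
def cyclicLift (J : Fin ((g - 1) * F)) (k : Fin K) : Option (Fin (g * S)) :=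
  (P J.modNat k).map fun s => mkVal g S hg s (pdaRank P s k + J.divNat)

lemma cyclicLift_eq_none_iff {J : Fin ((g - 1) * F)} {k : Fin K} :
    cyclicLift g hg P J k = none ↔ P J.modNat k = none :=
  Option.map_eq_none_iff

lemma cyclicLift_eq_some_iff {J : Fin ((g - 1) * F)} {k : Fin K} {s : Fin S} {x : ℕ} :
    cyclicLift g hg P J k = some (mkVal g S hg s x) ↔
      P J.modNat k = some s ∧ (pdaRank P s k + J.divNat) % g = x % g := by
  simp only [cyclicLift, Option.map_eq_some_iff, mkVal_eq_mkVal_iff]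
  constructor
  · rintro ⟨s', hs', rfl, hx⟩
    exact ⟨hs', hx⟩
  · rintro ⟨hs, hx⟩
    exact ⟨s, hs, rfl, hx⟩

lemma IsPDA.cyclicLift_cell_eq_iff (hP : IsPDA K F Z S P) (hreg : PDARegular K F S g P)
    {J₁ J₂ : Fin ((g - 1) * F)} {k₁ k₂ : Fin K} {s : Fin S} {x : ℕ}
    (h₁ : cyclicLift g hg P J₁ k₁ = some (mkVal g S hg s x))
    (h₂ : cyclicLift g hg P J₂ k₂ = some (mkVal g S hg s x)) :
    (J₁.modNat, k₁) = (J₂.modNat, k₂) ↔ J₁.divNat = J₂.divNat := by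
  rw [cyclicLift_eq_some_iff] at h₁ h₂
  have hc₁ : (J₁.modNat, k₁) ∈ pdaCells P s := mem_pdaCells.2 h₁.1
  have hc₂ : (J₂.modNat, k₂) ∈ pdaCells P s := mem_pdaCells.2 h₂.1
  have hmod : pdaRank P s k₁ + J₁.divNat ≡ pdaRank P s k₂ + J₂.divNat [MOD g] :=
    h₁.2.trans h₂.2.symm
  constructor
  · intro h
    obtain rfl : k₁ = k₂ := congrArg Prod.snd h
    exact Fin.ext ((Nat.ModEq.add_left_cancel' _ hmod).eq_of_lt_of_lt (by omega) (by omega))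
  · intro h
    rw [h] at hmod
    refine hP.injOn_pdaRank s hc₁ hc₂ ((Nat.ModEq.add_right_cancel' _ hmod).eq_of_lt_of_lt ?_ ?_)
    · exact hreg.card_pdaCells s ▸ pdaRank_lt_card hc₁
    · exact hreg.card_pdaCells s ▸ pdaRank_lt_card hc₂

theorem IsPDA.cyclicLift_regular (hP : IsPDA K F Z S P) (hreg : PDARegular K F S g P) :
    PDARegular K ((g - 1) * F) (g * S) (g - 1) (cyclicLift g hg P) := by
  intro t
  obtain ⟨s, x, rfl⟩ := exists_mkVal_eq hg t
  refine (card_bij (t := (univ : Finset (Fin (g - 1)))) (fun Jk _ => Jk.1.divNat)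
    (fun _ _ => mem_univ _) ?_ ?_).trans (by simp)
  · rintro ⟨J₁, k₁⟩ h₁ ⟨J₂, k₂⟩ h₂ hdiv
    rw [mem_filter] at h₁ h₂
    have hcell := (hP.cyclicLift_cell_eq_iff hreg h₁.2 h₂.2).2 hdiv
    rw [Prod.mk.injEq] at hcell ⊢
    refine ⟨finProdFinEquiv.symm.injective ?_, hcell.2⟩
    rw [finProdFinEquiv_symm_apply, finProdFinEquiv_symm_apply, hdiv, hcell.1]
  · intro i _
    obtain ⟨jk, hjk, hρ⟩ := hP.exists_pdaRank_eq (s := s) (r := (x + (g - i)) % g)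
      (by rw [hreg.card_pdaCells]; exact Nat.mod_lt _ hg)
    obtain ⟨hdiv, hmod⟩ := divNat_modNat_finProdFinEquiv i jk.1
    refine ⟨(finProdFinEquiv (i, jk.1), jk.2), ?_, hdiv⟩
    rw [mem_filter, cyclicLift_eq_some_iff, hmod, hdiv, hρ]
    exact ⟨mem_univ _, mem_pdaCells.1 hjk, add_sub_add_mod (by omega) x⟩

theorem IsPDA.cyclicLift_isPDA (hP : IsPDA K F Z S P) (hreg : PDARegular K F S g P) (hg₁ : 1 < g) :
    IsPDA K ((g - 1) * F) ((g - 1) * Z) (g * S) (cyclicLift g hg P) := by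
  refine ⟨fun k => ?_, fun t => ?_, ?_⟩
  · simp only [cyclicLift_eq_none_iff]
    rw [card_filter_modNat (fun j => P j k = none), hP.1 k]
  · have hcard := hP.cyclicLift_regular hreg (hg := hg) t
    obtain ⟨Jk, hJk⟩ := card_pos.1 (hcard ▸ Nat.sub_pos_of_lt hg₁)
    exact ⟨Jk.1, Jk.2, (mem_filter.1 hJk).2⟩
  · intro J₁ J₂ k₁ k₂ t h₁ h₂ hne
    obtain ⟨s, x, rfl⟩ := exists_mkVal_eq hg t
    rw [cyclicLift_eq_none_iff, cyclicLift_eq_none_iff]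
    by_cases hk : k₁ = k₂
    · subst hk
      have hc₁ : (J₁.modNat, k₁) ∈ pdaCells P s := mem_pdaCells.2 (cyclicLift_eq_some_iff.1 h₁).1
      have hc₂ : (J₂.modNat, k₁) ∈ pdaCells P s := mem_pdaCells.2 (cyclicLift_eq_some_iff.1 h₂).1
      have hcell := hP.eq_of_mem_pdaCells_of_snd_eq hc₁ hc₂ rfl
      have hdiv := (hP.cyclicLift_cell_eq_iff hreg h₁ h₂).1 hcell
      refine absurd ?_ hne
      rw [Prod.mk.injEq] at hcell ⊢
      refine ⟨finProdFinEquiv.symm.injective ?_, rfl⟩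
      rw [finProdFinEquiv_symm_apply, finProdFinEquiv_symm_apply, hdiv, hcell.1]
    · exact hP.2.2 _ _ k₁ k₂ s (cyclicLift_eq_some_iff.1 h₁).1 (cyclicLift_eq_some_iff.1 h₂).1
        (fun h => hk (congrArg Prod.snd h))

end CyclicLift

section Condition1

variable {K F S Z g : ℕ} {hg : 0 < g} {P : Fin F → Fin K → Option (Fin S)}

/-- The cell of `s` of rank `(x + 1) % g` is the only one whose shifts `0, …, g - 2` never
produce the residue `x % g`. -/
lemma IsPDA.cyclicLift_starRow (hP : IsPDA K F Z S P) {s : Fin S} {x : ℕ}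
    {jk : Fin F × Fin K} (hjk : jk ∈ pdaCells P s) (hρ : pdaRank P s jk.2 = (x + 1) % g)
    {J : Fin ((g - 1) * F)} (hJ : J.modNat = jk.1) :
    PDAStarRow K ((g - 1) * F) (g * S) (cyclicLift g hg P) J (mkVal g S hg s x) := by
  intro J' k h
  rw [cyclicLift_eq_some_iff] at h
  rw [cyclicLift_eq_none_iff, hJ]
  have hne : jk ≠ (J'.modNat, k) := by
    rintro rfl
    rw [hρ] at h
    exact succ_mod_add_mod_ne (by omega) x h.2
  exact (hP.2.2 _ _ _ _ s (mem_pdaCells.1 hjk) h.1 hne).1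

lemma IsPDA.exists_cell_pdaRank_succ (hP : IsPDA K F Z S P) (hreg : PDARegular K F S g P) :
    ∃ e : Fin (g * S) → Fin F × Fin K, ∀ s x,
      e (mkVal g S hg s x) ∈ pdaCells P s ∧
        pdaRank P s (e (mkVal g S hg s x)).2 = (x + 1) % g := by
  have h : ∀ t : Fin (g * S), ∃ jk : Fin F × Fin K, ∀ s x, mkVal g S hg s x = t →
      jk ∈ pdaCells P s ∧ pdaRank P s jk.2 = (x + 1) % g := by
    intro t
    obtain ⟨s, x, rfl⟩ := exists_mkVal_eq hg t
    obtain ⟨jk, hjk, hρ⟩ := hP.exists_pdaRank_eq (s := s) (r := (x + 1) % g)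
      (by rw [hreg.card_pdaCells]; exact Nat.mod_lt _ hg)
    refine ⟨jk, fun s' x' h => ?_⟩
    obtain ⟨rfl, hx⟩ := mkVal_eq_mkVal_iff.1 h
    exact ⟨hjk, hρ.trans (Nat.ModEq.add_right 1 hx.symm)⟩
  choose e he using h
  exact ⟨e, fun s x => he _ s x rfl⟩

lemma IsPDA.card_filter_fst_eq (hP : IsPDA K F Z S P) (hreg : PDARegular K F S g P)
    {e : Fin (g * S) → Fin F × Fin K}
    (he : ∀ s x, e (mkVal g S hg s x) ∈ pdaCells P s ∧
      pdaRank P s (e (mkVal g S hg s x)).2 = (x + 1) % g) (j : Fin F) :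
    (univ.filter fun t => (e t).1 = j).card = (univ.filter fun k => P j k ≠ none).card := by
  refine card_bij (fun t _ => (e t).2) (fun t ht => ?_) (fun t₁ ht₁ t₂ ht₂ hk => ?_)
    (fun k hk => ?_)
  · obtain ⟨s, x, rfl⟩ := exists_mkVal_eq hg t
    rw [mem_filter] at ht ⊢
    refine ⟨mem_univ _, ?_⟩
    rw [← ht.2, mem_pdaCells.1 (he s x).1]
    exact Option.some_ne_none s
  · obtain ⟨s₁, x₁, rfl⟩ := exists_mkVal_eq hg t₁
    obtain ⟨s₂, x₂, rfl⟩ := exists_mkVal_eq hg t₂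
    have hcell : e (mkVal g S hg s₁ x₁) = e (mkVal g S hg s₂ x₂) :=
      Prod.ext ((mem_filter.1 ht₁).2.trans (mem_filter.1 ht₂).2.symm) hk
    have hs : s₁ = s₂ := by
      have h₁ := mem_pdaCells.1 (he s₁ x₁).1
      rw [hcell, mem_pdaCells.1 (he s₂ x₂).1] at h₁
      exact (Option.some_injective _ h₁).symm
    subst hs
    have hx : (x₁ + 1) % g = (x₂ + 1) % g := (he s₁ x₁).2.symm.trans (hcell ▸ (he s₁ x₂).2)
    exact mkVal_eq_mkVal_iff.2 ⟨rfl, Nat.ModEq.add_right_cancel' 1 hx⟩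
  · obtain ⟨s, hs⟩ := Option.ne_none_iff_exists'.1 (mem_filter.1 hk).2
    have hjk : (j, k) ∈ pdaCells P s := mem_pdaCells.2 hs
    have hρ : pdaRank P s k < g := hreg.card_pdaCells s ▸ pdaRank_lt_card hjk
    refine ⟨mkVal g S hg s (pdaRank P s k + (g - 1)), ?_⟩
    have hcell : e (mkVal g S hg s (pdaRank P s k + (g - 1))) = (j, k) :=
      hP.injOn_pdaRank s (he _ _).1 hjk ((he _ _).2.trans (add_pred_succ_mod hρ))
    simp [hcell]

theorem IsPDA.cyclicLift_condition1 (hP : IsPDA K F Z S P) (hreg : PDARegular K F S g P)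
    (hc2 : PDACondition2 K F S P) (hgS : g * S = K * (F - Z)) (hg₁ : 1 < g) :
    PDACondition1 K ((g - 1) * F) ((g - 1) * Z) (g * S) (g - 1) (cyclicLift g hg P) := by
  have hF : (g - 1) * F / (g - 1) = F := Nat.mul_div_cancel_left F (by omega)
  obtain ⟨e, he⟩ := hP.exists_cell_pdaRank_succ (hg := hg) hreg
  refine ⟨dvd_mul_right _ _, dvd_mul_right _ _, fun J k => ?_, fun t => Fin.cast hF.symm (e t).1,
    fun t => ?_, fun j => ?_⟩
  · simp only [cyclicLift_eq_none_iff]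
    congr! 2
    ext
    simp [Fin.modNat, hF]
  · obtain ⟨s, x, rfl⟩ := exists_mkVal_eq hg t
    refine hP.cyclicLift_starRow (he s x).1 (he s x).2 (Fin.ext ?_)
    simp [Fin.modNat, Nat.mod_eq_of_lt (e _).1.isLt]
  · have hfiber : ∀ t, Fin.cast hF.symm (e t).1 = j ↔ (e t).1 = Fin.cast hF j := by
      simp [Fin.ext_iff]
    simp only [hfiber]
    rw [hP.card_filter_fst_eq hreg he, mul_left_comm, hP.card_filter_ne_none_mul hc2, hgS]

end Condition1

/-- Proposition 5: from a `g`-regular `(K1,F1,Z1,S1)` PDA `P` satisfying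
Condition 2, the array `P1` of size `(g-1)F1 × K1` defined by (in 0-based form)
`P1(J,k) = *` if `P(J % F1, k) = *`, and `P1(J,k) = g(s-1) + <η+i-1>_g` if
`P(J % F1, k) = s`, where `η-1` counts the cells containing `s` in earlier columns and
`i-1 = J / F1`, is a `(g-1)`-regular `(K1,(g-1)F1,(g-1)Z1,gS1)` PDA satisfying Condition 1
with parameter `λ = g-1`. -/
theorem proP1k (K1 F1 Z1 S1 g : ℕ)
    (hF1 : 0 < F1)
    (hg : 2 ≤ g) (hgdef : g * S1 = K1 * (F1 - Z1))
    (P : Fin F1 → Fin K1 → Option (Fin S1))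
    (hPDA : IsPDA K1 F1 Z1 S1 P) (hreg : PDARegular K1 F1 S1 g P)
    (hc2 : PDACondition2 K1 F1 S1 P)
    (P1 : Fin ((g - 1) * F1) → Fin K1 → Option (Fin (g * S1)))
    (hP1 : ∀ (J : Fin ((g - 1) * F1)) (k : Fin K1),
      (P ⟨J.val % F1, Nat.mod_lt _ hF1⟩ k = none → P1 J k = none) ∧
      (∀ s : Fin S1, P ⟨J.val % F1, Nat.mod_lt _ hF1⟩ k = some s →
        P1 J k = some (mkVal g S1 (by omega) s
          ((Finset.univ.filter fun jk : Fin F1 × Fin K1 =>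
              P jk.1 jk.2 = some s ∧ jk.2 < k).card + J.val / F1)))) :
    IsPDA K1 ((g - 1) * F1) ((g - 1) * Z1) (g * S1) P1 ∧
    PDARegular K1 ((g - 1) * F1) (g * S1) (g - 1) P1 ∧
    PDACondition1 K1 ((g - 1) * F1) ((g - 1) * Z1) (g * S1) (g - 1) P1 := by
  obtain rfl : P1 = cyclicLift g (by omega) P := by
    funext J k
    rcases h : P J.modNat k with _ | s
    · rw [(hP1 J k).1 h, cyclicLift, h, Option.map_none]
    · rw [(hP1 J k).2 s h, cyclicLift, h, Option.map_some]
      rfl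
  exact ⟨hPDA.cyclicLift_isPDA hreg (by omega), hPDA.cyclicLift_regular hreg,
    hPDA.cyclicLift_condition1 hreg hc2 hgdef (by omega)⟩
end

section
/- For all positive integers H, b, r, m with r < b and 2b ≤ H, there exists an m·binomial(H−2b+r, r)-regular placement delivery array with parameters ( m·binomial(H, b+r), binomial(H,b)^m, (binomial(H,b) − binomial(b+r,r)·binomial(H−b−r, b−r))·binomial(H,b)^{m−1}, binomial(H−b, b−r)·binomial(H,b)^m ). -/
open Finset

namespace SBS

abbrev BS (H n : ℕ) := {s : Finset (Fin H) // s.card = n}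

lemma card_BS (H n : ℕ) : Fintype.card (BS H n) = H.choose n := by
  rw [Fintype.card_finset_len]; simp

abbrev Row (H b m : ℕ) := Fin m → BS H b
abbrev Col (H b r m : ℕ) := Fin m × BS H (b + r)
abbrev Lab (H b r m : ℕ) := (Fin m → BS H b) × Fin ((H - b).choose (b - r))

def Dset (H b r : ℕ) (C : Finset (Fin H)) : Finset (Finset (Fin H)) := Cᶜ.powersetCard (b - r)

noncomputable def enc (H b r : ℕ) (C : BS H b) :
    {D // D ∈ Dset H b r C.1} ≃ Fin ((H - b).choose (b - r)) := by
  refine Fintype.equivFinOfCardEq ?_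
  show Fintype.card (↥(Dset H b r C.1)) = _
  rw [Fintype.card_coe, Dset, Finset.card_powersetCard, Finset.card_compl, C.2]
  simp

lemma enc_congr (H b r : ℕ) (C C' : BS H b) (h : C = C') (D D' : Finset (Fin H))
    (hD : D ∈ Dset H b r C.1) (hD' : D' ∈ Dset H b r C'.1) (hDD : D = D') :
    enc H b r C ⟨D, hD⟩ = enc H b r C' ⟨D', hD'⟩ := by
  subst h; subst hDD; rfl

/-- card of `A \ fi` when `|A| = b+r`, `|fi ∩ A| = r`. -/
lemma card_sd1 (H b r : ℕ) (A fi : Finset (Fin H)) (hA : A.card = b + r) (h : (fi ∩ A).card = r) :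
    (A \ fi).card = b := by
  have h1 := Finset.card_sdiff_add_card_inter A fi
  rw [Finset.inter_comm] at h1
  omega

lemma card_sd2 (H b r : ℕ) (A fi : Finset (Fin H)) (hfi : fi.card = b) (h : (fi ∩ A).card = r) :
    (fi \ A).card = b - r := by
  have h1 := Finset.card_sdiff_add_card_inter fi A
  omega

lemma mem_Dset_sd (H b r : ℕ) (A fi : Finset (Fin H)) (hfi : fi.card = b) (h : (fi ∩ A).card = r) :
    fi \ A ∈ Dset H b r (A \ fi) := by
  rw [Dset, Finset.mem_powersetCard]
  refine ⟨?_, card_sd2 H b r A fi hfi h⟩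
  intro x hx
  simp only [Finset.mem_sdiff] at hx
  simp only [Finset.mem_compl, Finset.mem_sdiff]
  tauto

noncomputable def P0 (H b r m : ℕ) (f : Row H b m) (c : Col H b r m) : Option (Lab H b r m) :=
  if h : ((f c.1).1 ∩ c.2.1).card = r then
    some (Function.update f c.1 ⟨c.2.1 \ (f c.1).1, card_sd1 H b r c.2.1 (f c.1).1 c.2.2 h⟩,
      enc H b r ⟨c.2.1 \ (f c.1).1, card_sd1 H b r c.2.1 (f c.1).1 c.2.2 h⟩
        ⟨(f c.1).1 \ c.2.1, mem_Dset_sd H b r c.2.1 (f c.1).1 (f c.1).2 h⟩)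
  else none

lemma P0_eq_none_iff (H b r m : ℕ) (f : Row H b m) (c : Col H b r m) :
    P0 H b r m f c = none ↔ ¬ ((f c.1).1 ∩ c.2.1).card = r := by
  rw [P0]; split <;> simp_all

noncomputable def dec (H b r m : ℕ) (s : Lab H b r m) (i : Fin m) : Finset (Fin H) :=
  ((enc H b r (s.1 i)).symm s.2).1

lemma dec_spec (H b r m : ℕ) (s : Lab H b r m) (i : Fin m) :
    dec H b r m s i ⊆ (s.1 i).1ᶜ ∧ (dec H b r m s i).card = b - r := by
  have := ((enc H b r (s.1 i)).symm s.2).2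
  simp only [Dset, Finset.mem_powersetCard] at this
  exact this

noncomputable def Eok (H b r m : ℕ) (s : Lab H b r m) (i : Fin m) : Finset (Finset (Fin H)) :=
  (((s.1 i).1 ∪ dec H b r m s i)ᶜ).powersetCard r

noncomputable def rowOf (H b r m : ℕ) (hrb : r < b) (s : Lab H b r m) (i : Fin m) (E : Finset (Fin H))
    (hE : E ∈ Eok H b r m s i) : Row H b m :=
  Function.update s.1 i ⟨dec H b r m s i ∪ E, by
    rw [Eok, Finset.mem_powersetCard] at hE
    rw [Finset.card_union_of_disjoint, (dec_spec H b r m s i).2, hE.2]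
    · omega
    · refine Finset.disjoint_left.2 fun x hx1 hx2 => ?_
      have := hE.1 hx2
      simp only [Finset.mem_compl, Finset.mem_union, not_or] at this
      exact this.2 hx1⟩

noncomputable def colOf (H b r m : ℕ) (s : Lab H b r m) (i : Fin m) (E : Finset (Fin H))
    (hE : E ∈ Eok H b r m s i) : Col H b r m :=
  (i, ⟨(s.1 i).1 ∪ E, by
    rw [Eok, Finset.mem_powersetCard] at hE
    rw [Finset.card_union_of_disjoint, (s.1 i).2, hE.2]
    refine Finset.disjoint_left.2 fun x hx1 hx2 => ?_
    have := hE.1 hx2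
    simp only [Finset.mem_compl, Finset.mem_union, not_or] at this
    exact this.1 hx1⟩)

/-- the set identity `(D ∪ E) ∩ (T_i ∪ E) = E` -/
lemma E_recover (H b r m : ℕ) (hrb : r < b) (s : Lab H b r m) (i : Fin m) (E : Finset (Fin H))
    (hE : E ∈ Eok H b r m s i) :
    ((rowOf H b r m hrb s i E hE) i).1 ∩ ((colOf H b r m s i E hE).2).1 = E := by
  rw [Eok, Finset.mem_powersetCard] at hE
  have hD := dec_spec H b r m s i
  rw [rowOf, colOf]
  simp only [Function.update_self]
  ext x
  simp only [Finset.mem_inter, Finset.mem_union]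
  constructor
  · rintro ⟨h1 | h1, h2 | h2⟩
    · exact absurd h2 (by simpa using hD.1 h1)
    · exact h2
    · exact h1
    · exact h1
  · intro hx
    exact ⟨Or.inr hx, Or.inr hx⟩


lemma eq_update (H b m : ℕ) (f T : Row H b m) (i : Fin m) (x : BS H b)
    (hx : x.1 = (f i).1) (hT : ∀ j, j ≠ i → T j = f j) : f = Function.update T i x := by
  funext j
  by_cases hj : j = i
  · subst hj; rw [Function.update_self]; exact (Subtype.ext hx).symm
  · rw [Function.update_of_ne hj]; exact (hT j hj).symm

lemma P0_sound (H b r m : ℕ) (hrb : r < b) (s : Lab H b r m) (i : Fin m) (E : Finset (Fin H))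
    (hE : E ∈ Eok H b r m s i) :
    P0 H b r m (rowOf H b r m hrb s i E hE) (colOf H b r m s i E hE) = some s := by
  have hD := dec_spec H b r m s i
  have hEc : E.card = r ∧ E ⊆ ((s.1 i).1 ∪ dec H b r m s i)ᶜ := by
    simp only [Eok, Finset.mem_powersetCard] at hE; exact ⟨hE.2, hE.1⟩
  have hTE : ∀ x ∈ E, x ∉ (s.1 i).1 ∧ x ∉ dec H b r m s i := by
    intro x hx
    have := hEc.2 hx
    simp only [Finset.mem_compl, Finset.mem_union, not_or] at this
    exact this
  have hDT : ∀ x ∈ dec H b r m s i, x ∉ (s.1 i).1 := fun x hx => by simpa using hD.1 hx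
  have hrec' : (dec H b r m s i ∪ E) ∩ ((s.1 i).1 ∪ E) = E := by
    ext x
    simp only [Finset.mem_inter, Finset.mem_union]
    constructor
    · rintro ⟨h1 | h1, h2 | h2⟩
      · exact absurd h2 (hDT x h1)
      · exact h2
      · exact h1
      · exact h1
    · intro hx; exact ⟨Or.inr hx, Or.inr hx⟩
  have hA' : ((s.1 i).1 ∪ E) \ (dec H b r m s i ∪ E) = (s.1 i).1 := by
    ext x
    simp only [Finset.mem_sdiff, Finset.mem_union, not_or]
    constructor
    · rintro ⟨h1 | h1, _, h3⟩
      · exact h1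
      · exact absurd h1 h3
    · intro hx
      exact ⟨Or.inl hx, fun hd => hDT x hd hx, fun he => (hTE x he).1 hx⟩
  have hB' : (dec H b r m s i ∪ E) \ ((s.1 i).1 ∪ E) = dec H b r m s i := by
    ext x
    simp only [Finset.mem_sdiff, Finset.mem_union, not_or]
    constructor
    · rintro ⟨h1 | h1, _, h3⟩
      · exact h1
      · exact absurd h1 h3
    · intro hx
      exact ⟨Or.inl hx, fun ht => hDT x hx ht, fun he => (hTE x he).2 hx⟩
  have hfi : ((rowOf H b r m hrb s i E hE) i).1 = dec H b r m s i ∪ E := by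
    simp only [rowOf, Function.update_self]
  rw [P0]
  simp only [colOf, rowOf, Function.update_self]
  rw [dif_pos (by rw [hrec']; exact hEc.1)]
  refine congrArg some (Prod.ext ?_ ?_)
  · exact (eq_update H b m s.1 _ i _ hA' (fun j hj => Function.update_of_ne hj _ _)).symm
  · exact (enc_congr H b r _ (s.1 i)
      (Subtype.ext (by
        show ((s.1 i).1 ∪ E) \ ((rowOf H b r m hrb s i E hE) i).1 = (s.1 i).1
        rw [hfi]; exact hA')) _ _ _
      (((enc H b r (s.1 i)).symm s.2).2) hB').trans
      ((enc H b r (s.1 i)).apply_symm_apply s.2)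

lemma P0_complete (H b r m : ℕ) (hrb : r < b) (f : Row H b m) (c : Col H b r m) (s : Lab H b r m)
    (h : P0 H b r m f c = some s) :
    ∃ (E : Finset (Fin H)) (hE : E ∈ Eok H b r m s c.1),
      f = rowOf H b r m hrb s c.1 E hE ∧ c = colOf H b r m s c.1 E hE := by
  obtain ⟨i, A⟩ := c
  rw [P0] at h
  split at h
  case isFalse => exact absurd h (by simp)
  case isTrue hcond =>
  have h' := Option.some.inj h
  have h1 : Function.update f i
      (⟨A.1 \ (f i).1, card_sd1 H b r A.1 (f i).1 A.2 hcond⟩ : BS H b) = s.1 :=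
    congrArg Prod.fst h'
  have h2 := congrArg Prod.snd h'
  have hTi : s.1 i = (⟨A.1 \ (f i).1, card_sd1 H b r A.1 (f i).1 A.2 hcond⟩ : BS H b) := by
    rw [← h1, Function.update_self]
  have hTi' : (s.1 i).1 = A.1 \ (f i).1 := congrArg Subtype.val hTi
  have hmem : (f i).1 \ A.1 ∈ Dset H b r (s.1 i).1 := by
    rw [hTi']; exact mem_Dset_sd H b r A.1 (f i).1 (f i).2 hcond
  have h2' : enc H b r (s.1 i) ⟨(f i).1 \ A.1, hmem⟩ = s.2 := by
    rw [← h2]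
    exact (enc_congr H b r _ _ hTi.symm _ _ _ _ rfl).symm
  have hdec : dec H b r m s i = (f i).1 \ A.1 := by
    rw [dec, ← h2', Equiv.symm_apply_apply]
  have hE : (f i).1 ∩ A.1 ∈ Eok H b r m s i := by
    simp only [Eok, Finset.mem_powersetCard]
    refine ⟨?_, hcond⟩
    intro x hx
    simp only [Finset.mem_inter] at hx
    simp only [Finset.mem_compl, Finset.mem_union, not_or, hTi', hdec, Finset.mem_sdiff]
    constructor
    · rintro ⟨_, hnot⟩; exact hnot hx.1
    · rintro ⟨_, hnot⟩; exact hnot hx.2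
  refine ⟨(f i).1 ∩ A.1, hE, ?_, ?_⟩
  · have hset : dec H b r m s i ∪ ((f i).1 ∩ A.1) = (f i).1 := by
      rw [hdec]
      ext x
      simp only [Finset.mem_union, Finset.mem_sdiff, Finset.mem_inter]
      tauto
    refine eq_update H b m f s.1 i _ hset (fun j hj => ?_)
    rw [← h1, Function.update_of_ne hj]
  · have hset : (s.1 i).1 ∪ ((f i).1 ∩ A.1) = A.1 := by
      rw [hTi']
      ext x
      simp only [Finset.mem_union, Finset.mem_sdiff, Finset.mem_inter]
      constructor
      · rintro (⟨hx, _⟩ | ⟨_, hx⟩) <;> exact hx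
      · intro hx
        by_cases hf : x ∈ (f i).1
        · exact Or.inr ⟨hf, hx⟩
        · exact Or.inl ⟨hx, hf⟩
    exact Prod.ext rfl (Subtype.ext hset.symm)


lemma rowOf_apply (H b r m : ℕ) (hrb : r < b) (s : Lab H b r m) (i : Fin m)
    (E : Finset (Fin H)) (hE : E ∈ Eok H b r m s i) :
    ((rowOf H b r m hrb s i E hE) i).1 = dec H b r m s i ∪ E := by
  simp only [rowOf, Function.update_self]

lemma rowOf_congr (H b r m : ℕ) (hrb : r < b) (s : Lab H b r m) (i : Fin m)
    (E E' : Finset (Fin H)) (h : E = E') (hE : E ∈ Eok H b r m s i)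
    (hE' : E' ∈ Eok H b r m s i) :
    rowOf H b r m hrb s i E hE = rowOf H b r m hrb s i E' hE' := by subst h; rfl

lemma colOf_congr (H b r m : ℕ) (s : Lab H b r m) (i : Fin m)
    (E E' : Finset (Fin H)) (h : E = E') (hE : E ∈ Eok H b r m s i)
    (hE' : E' ∈ Eok H b r m s i) :
    colOf H b r m s i E hE = colOf H b r m s i E' hE' := by subst h; rfl

lemma C3core (H b r m : ℕ) (hrb : r < b) (f f' : Row H b m) (c c' : Col H b r m)
    (s : Lab H b r m) (h : P0 H b r m f c = some s) (h' : P0 H b r m f' c' = some s)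
    (hne : ¬ (f = f' ∧ c = c')) : P0 H b r m f c' = none := by
  obtain ⟨i, A⟩ := c
  obtain ⟨i', A'⟩ := c'
  obtain ⟨E, hE, hf, hc⟩ := P0_complete H b r m hrb f (i, A) s h
  obtain ⟨E', hE', hf', hc'⟩ := P0_complete H b r m hrb f' (i', A') s h'
  rw [P0_eq_none_iff]
  show ¬ ((f i').1 ∩ A'.1).card = r
  have hA'v : A'.1 = (s.1 i').1 ∪ E' := congrArg (fun p => (p.2 : BS H (b+r)).1) hc'
  by_cases hii : i' = i
  · subst hii
    have hfv : (f i').1 = dec H b r m s i' ∪ E := by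
      rw [hf]; exact rowOf_apply H b r m hrb s i' E hE
    have hDT : ∀ x ∈ dec H b r m s i', x ∉ (s.1 i').1 := fun x hx => by
      simpa using (dec_spec H b r m s i').1 hx
    have hEc : E.card = r ∧ ∀ x ∈ E, x ∉ (s.1 i').1 ∧ x ∉ dec H b r m s i' := by
      simp only [Eok, Finset.mem_powersetCard] at hE
      refine ⟨hE.2, fun x hx => ?_⟩
      have := hE.1 hx
      simp only [Finset.mem_compl, Finset.mem_union, not_or] at this
      exact this
    have hE'c : E'.card = r ∧ ∀ x ∈ E', x ∉ (s.1 i').1 ∧ x ∉ dec H b r m s i' := by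
      simp only [Eok, Finset.mem_powersetCard] at hE'
      refine ⟨hE'.2, fun x hx => ?_⟩
      have := hE'.1 hx
      simp only [Finset.mem_compl, Finset.mem_union, not_or] at this
      exact this
    have hset : (f i').1 ∩ A'.1 = E ∩ E' := by
      rw [hfv, hA'v]
      ext x
      simp only [Finset.mem_inter, Finset.mem_union]
      constructor
      · rintro ⟨h1 | h1, h2 | h2⟩
        · exact absurd h2 (hDT x h1)
        · exact absurd h1 ((hE'c.2 x h2).2)
        · exact absurd h2 ((hEc.2 x h1).1)
        · exact ⟨h1, h2⟩
      · rintro ⟨h1, h2⟩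
        exact ⟨Or.inr h1, Or.inr h2⟩
    rw [hset]
    intro hcard
    have he1 : E ∩ E' = E := Finset.eq_of_subset_of_card_le Finset.inter_subset_left
      (by rw [hcard, hEc.1])
    have he2 : E ∩ E' = E' := Finset.eq_of_subset_of_card_le Finset.inter_subset_right
      (by rw [hcard, hE'c.1])
    have hEE : E = E' := he1.symm.trans he2
    subst hEE
    exact hne ⟨hf.trans hf'.symm, hc.trans hc'.symm⟩
  · have hfv : f i' = s.1 i' := by
      rw [hf]
      exact Function.update_of_ne hii _ _
    rw [hfv, hA'v]
    rw [Finset.inter_eq_left.2 Finset.subset_union_left, (s.1 i').2]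
    omega

lemma exists_cell (H b r m : ℕ) (hm : 0 < m) (hrb : r < b) (hbH : 2 * b ≤ H)
    (s : Lab H b r m) : ∃ f c, P0 H b r m f c = some s := by
  set i : Fin m := ⟨0, hm⟩
  have hcard : r ≤ (((s.1 i).1 ∪ dec H b r m s i)ᶜ).card := by
    rw [Finset.card_compl, Finset.card_union_of_disjoint, (s.1 i).2,
      (dec_spec H b r m s i).2]
    · simp only [Fintype.card_fin]; omega
    · refine Finset.disjoint_left.2 fun x hx1 hx2 => ?_
      exact absurd hx1 (by simpa using (dec_spec H b r m s i).1 hx2)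
  obtain ⟨E, hEsub, hEcard⟩ := Finset.exists_subset_card_eq hcard
  have hE : E ∈ Eok H b r m s i := Finset.mem_powersetCard.2 ⟨hEsub, hEcard⟩
  exact ⟨rowOf H b r m hrb s i E hE, colOf H b r m s i E hE, P0_sound H b r m hrb s i E hE⟩

lemma E_inter (H b r m : ℕ) (s : Lab H b r m) (i : Fin m) (E : Finset (Fin H))
    (hE : E ∈ Eok H b r m s i) :
    (dec H b r m s i ∪ E) ∩ ((s.1 i).1 ∪ E) = E := by
  have hDT : ∀ x ∈ dec H b r m s i, x ∉ (s.1 i).1 := fun x hx => by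
    simpa using (dec_spec H b r m s i).1 hx
  have hTE : ∀ x ∈ E, x ∉ (s.1 i).1 ∧ x ∉ dec H b r m s i := by
    intro x hx
    simp only [Eok, Finset.mem_powersetCard] at hE
    have := hE.1 hx
    simp only [Finset.mem_compl, Finset.mem_union, not_or] at this
    exact this
  ext x
  simp only [Finset.mem_inter, Finset.mem_union]
  constructor
  · rintro ⟨h1 | h1, h2 | h2⟩
    · exact absurd h2 (hDT x h1)
    · exact h2
    · exact h1
    · exact h1
  · intro hx; exact ⟨Or.inr hx, Or.inr hx⟩

noncomputable def cellEquiv (H b r m : ℕ) (hrb : r < b) (s : Lab H b r m) :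
    {fc : Row H b m × Col H b r m // P0 H b r m fc.1 fc.2 = some s}
      ≃ (i : Fin m) × {E // E ∈ Eok H b r m s i} where
  toFun fc := ⟨fc.1.2.1, ⟨(fc.1.1 fc.1.2.1).1 ∩ (fc.1.2.2).1, by
    obtain ⟨E, hE, hf, hc⟩ := P0_complete H b r m hrb fc.1.1 fc.1.2 s fc.2
    have h1 : (fc.1.1 fc.1.2.1).1 = dec H b r m s fc.1.2.1 ∪ E := by
      rw [hf]; exact rowOf_apply H b r m hrb s fc.1.2.1 E hE
    have h2 : (fc.1.2.2).1 = (s.1 fc.1.2.1).1 ∪ E :=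
      congrArg (fun X : Col H b r m => (X.2 : BS H (b + r)).1) hc
    rw [h1, h2, E_inter H b r m s fc.1.2.1 E hE]
    exact hE⟩⟩
  invFun iE := ⟨(rowOf H b r m hrb s iE.1 iE.2.1 iE.2.2, colOf H b r m s iE.1 iE.2.1 iE.2.2),
    P0_sound H b r m hrb s iE.1 iE.2.1 iE.2.2⟩
  left_inv := fun fc => by
    obtain ⟨E, hE, hf, hc⟩ := P0_complete H b r m hrb fc.1.1 fc.1.2 s fc.2
    have h1 : (fc.1.1 fc.1.2.1).1 = dec H b r m s fc.1.2.1 ∪ E := by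
      rw [hf]; exact rowOf_apply H b r m hrb s fc.1.2.1 E hE
    have h2 : (fc.1.2.2).1 = (s.1 fc.1.2.1).1 ∪ E :=
      congrArg (fun X : Col H b r m => (X.2 : BS H (b + r)).1) hc
    have hEE : (fc.1.1 fc.1.2.1).1 ∩ (fc.1.2.2).1 = E := by
      rw [h1, h2]; exact E_inter H b r m s fc.1.2.1 E hE
    have hEmem : (fc.1.1 fc.1.2.1).1 ∩ (fc.1.2.2).1 ∈ Eok H b r m s fc.1.2.1 := by
      rw [hEE]; exact hE
    refine Subtype.ext (Prod.ext ?_ ?_)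
    · exact ((rowOf_congr H b r m hrb s fc.1.2.1 _ E hEE hEmem hE).trans hf.symm)
    · exact ((colOf_congr H b r m s fc.1.2.1 _ E hEE hEmem hE).trans hc.symm)
  right_inv := fun iE => by
    obtain ⟨i, E, hE⟩ := iE
    exact congrArg (Sigma.mk i) (Subtype.ext (E_recover H b r m hrb s i E hE))

lemma reg_count (H b r m : ℕ) (hrb : r < b) (hbH : 2 * b ≤ H) (s : Lab H b r m) :
    (Finset.univ.filter fun fc : Row H b m × Col H b r m =>
      P0 H b r m fc.1 fc.2 = some s).card = m * (H - 2 * b + r).choose r := by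
  rw [← Fintype.card_subtype]
  rw [Fintype.card_congr (cellEquiv H b r m hrb s)]
  rw [Fintype.card_sigma]
  have : ∀ i : Fin m, Fintype.card {E // E ∈ Eok H b r m s i} = (H - 2 * b + r).choose r := by
    intro i
    have : Fintype.card {E // E ∈ Eok H b r m s i} = (Eok H b r m s i).card :=
      Fintype.card_coe _
    rw [this, Eok, Finset.card_powersetCard, Finset.card_compl,
      Finset.card_union_of_disjoint, (s.1 i).2, (dec_spec H b r m s i).2]
    · simp only [Fintype.card_fin]
      congr 1
      omega
    · refine Finset.disjoint_left.2 fun x hx1 hx2 => ?_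
      exact absurd hx1 (by simpa using (dec_spec H b r m s i).1 hx2)
  simp only [this, Finset.sum_const, Finset.card_univ, Fintype.card_fin, smul_eq_mul]

noncomputable def splitEquiv (H b m : ℕ) (i : Fin m) (Q : BS H b → Prop) [DecidablePred Q] :
    {f : Row H b m // Q (f i)} ≃ {B : BS H b // Q B} × ({j : Fin m // j ≠ i} → BS H b) where
  toFun f := (⟨f.1 i, f.2⟩, fun j => f.1 j.1)
  invFun p := ⟨fun j => if h : j = i then p.1.1 else p.2 ⟨j, h⟩, by simpa using p.1.2⟩
  left_inv := fun f => by
    refine Subtype.ext (funext fun j => ?_)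
    dsimp only
    split
    · next h => subst h; rfl
    · rfl
  right_inv := fun p => by
    refine Prod.ext (Subtype.ext ?_) (funext fun j => ?_)
    · simp
    · dsimp only
      rw [dif_neg j.2]

noncomputable def interEquiv (H b r : ℕ) (hrb : r < b) (A : BS H (b + r)) :
    {B : BS H b // (B.1 ∩ A.1).card = r}
      ≃ ↥(A.1.powersetCard r) × ↥((A.1ᶜ).powersetCard (b - r)) where
  toFun B := (⟨B.1.1 ∩ A.1, Finset.mem_powersetCard.2 ⟨Finset.inter_subset_right, B.2⟩⟩,
    ⟨B.1.1 \ A.1, Finset.mem_powersetCard.2 ⟨fun x hx => by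
        simp only [Finset.mem_sdiff] at hx
        simpa using hx.2, card_sd2 H b r A.1 B.1.1 B.1.2 B.2⟩⟩)
  invFun p := ⟨⟨p.1.1 ∪ p.2.1, by
      have h1 := Finset.mem_powersetCard.1 p.1.2
      have h2 := Finset.mem_powersetCard.1 p.2.2
      rw [Finset.card_union_of_disjoint, h1.2, h2.2]
      · omega
      · refine Finset.disjoint_left.2 fun x hx1 hx2 => ?_
        have := h2.1 hx2
        simp only [Finset.mem_compl] at this
        exact this (h1.1 hx1)⟩, by
    have h1 := Finset.mem_powersetCard.1 p.1.2
    have h2 := Finset.mem_powersetCard.1 p.2.2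
    have : (p.1.1 ∪ p.2.1) ∩ A.1 = p.1.1 := by
      ext x
      simp only [Finset.mem_inter, Finset.mem_union]
      constructor
      · rintro ⟨h3 | h3, h4⟩
        · exact h3
        · exact absurd h4 (by simpa using h2.1 h3)
      · intro hx
        exact ⟨Or.inl hx, h1.1 hx⟩
    rw [this, h1.2]⟩
  left_inv := fun B => by
    refine Subtype.ext (Subtype.ext ?_)
    show B.1.1 ∩ A.1 ∪ B.1.1 \ A.1 = B.1.1
    ext x
    simp only [Finset.mem_union, Finset.mem_inter, Finset.mem_sdiff]
    tauto
  right_inv := fun p => by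
    have h1 := Finset.mem_powersetCard.1 p.1.2
    have h2 := Finset.mem_powersetCard.1 p.2.2
    refine Prod.ext (Subtype.ext ?_) (Subtype.ext ?_)
    · show (p.1.1 ∪ p.2.1) ∩ A.1 = p.1.1
      ext x
      simp only [Finset.mem_inter, Finset.mem_union]
      constructor
      · rintro ⟨h3 | h3, h4⟩
        · exact h3
        · exact absurd h4 (by simpa using h2.1 h3)
      · intro hx
        exact ⟨Or.inl hx, h1.1 hx⟩
    · show (p.1.1 ∪ p.2.1) \ A.1 = p.2.1
      ext x
      simp only [Finset.mem_sdiff, Finset.mem_union]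
      constructor
      · rintro ⟨h3 | h3, h4⟩
        · exact absurd (h1.1 h3) h4
        · exact h3
      · intro hx
        exact ⟨Or.inr hx, by simpa using h2.1 hx⟩

lemma col_count (H b r m : ℕ) (hm : 0 < m) (hrb : r < b) (hbH : 2 * b ≤ H)
    (c : Col H b r m) :
    (Finset.univ.filter fun f : Row H b m => P0 H b r m f c = none).card
      = (H.choose b - (b + r).choose r * (H - b - r).choose (b - r)) * (H.choose b) ^ (m - 1) := by
  classical
  have hQcard : (Finset.univ.filter fun f : Row H b m =>
      ((f c.1).1 ∩ (c.2).1).card = r).card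
      = ((b + r).choose r * (H - b - r).choose (b - r)) * (H.choose b) ^ (m - 1) := by
    rw [← Fintype.card_subtype]
    rw [Fintype.card_congr (splitEquiv H b m c.1 (fun B => (B.1 ∩ (c.2).1).card = r))]
    rw [Fintype.card_prod]
    have hc1 : Fintype.card {B : BS H b // (B.1 ∩ (c.2).1).card = r}
        = (b + r).choose r * (H - b - r).choose (b - r) := by
      rw [Fintype.card_congr (interEquiv H b r hrb c.2)]
      rw [Fintype.card_prod, Fintype.card_coe, Fintype.card_coe,
        Finset.card_powersetCard, Finset.card_powersetCard, Finset.card_compl, (c.2).2]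
      simp only [Fintype.card_fin]
      congr 2
      omega
    have hc2 : Fintype.card ({j : Fin m // j ≠ c.1} → BS H b) = (H.choose b) ^ (m - 1) := by
      rw [Fintype.card_fun, card_BS]
      congr 1
      simp [Fintype.card_subtype_compl]
    rw [hc1, hc2]
  have htot := Finset.card_filter_add_card_filter_not
    (s := (Finset.univ : Finset (Row H b m)))
    (p := fun f => ((f c.1).1 ∩ (c.2).1).card = r)
  have hcu : (Finset.univ : Finset (Row H b m)).card = (H.choose b) ^ m := by
    rw [Finset.card_univ, Fintype.card_fun, card_BS, Fintype.card_fin]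
  have hpred : (Finset.univ.filter fun f : Row H b m => P0 H b r m f c = none)
      = (Finset.univ.filter fun f : Row H b m => ¬ ((f c.1).1 ∩ (c.2).1).card = r) := by
    apply Finset.filter_congr
    intro f _
    simp [P0_eq_none_iff]
  obtain ⟨a, ha⟩ : ∃ a, (Finset.univ.filter fun f : Row H b m =>
      ((f c.1).1 ∩ (c.2).1).card = r).card = a := ⟨_, rfl⟩
  obtain ⟨n, hn⟩ : ∃ n, (Finset.univ.filter fun f : Row H b m =>
      ¬ ((f c.1).1 ∩ (c.2).1).card = r).card = n := ⟨_, rfl⟩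
  obtain ⟨u, hu⟩ : ∃ u, (Finset.univ : Finset (Row H b m)).card = u := ⟨_, rfl⟩
  rw [ha, hn, hu] at htot
  rw [ha] at hQcard
  rw [hu] at hcu
  rw [hpred, hn]
  clear ha hn hu hpred
  have hle : (b + r).choose r * (H - b - r).choose (b - r) * H.choose b ^ (m - 1)
      ≤ (H.choose b) ^ m := by rw [← hQcard, ← hcu]; omega
  have hpow : (H.choose b) ^ m = (H.choose b) * (H.choose b) ^ (m - 1) := by
    have h1 : m - 1 + 1 = m := Nat.succ_pred_eq_of_pos hm
    calc (H.choose b) ^ m = (H.choose b) ^ (m - 1 + 1) := by rw [h1]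
    _ = (H.choose b) * (H.choose b) ^ (m - 1) := by rw [pow_succ]; ring
  have hrhs := Nat.sub_mul (H.choose b) ((b + r).choose r * (H - b - r).choose (b - r))
    ((H.choose b) ^ (m - 1))
  omega

lemma card_filter_equiv2 {α β : Type*} [Fintype α] [Fintype β] (e : α ≃ β)
    (p : α → Prop) (q : β → Prop) [DecidablePred p] [DecidablePred q]
    (h : ∀ a, p a ↔ q (e a)) :
    (Finset.univ.filter p).card = (Finset.univ.filter q).card := by
  rw [← Fintype.card_subtype, ← Fintype.card_subtype]
  exact Fintype.card_congr (e.subtypeEquiv fun a => (h a).trans (Iff.rfl))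

lemma map_eq_some_iff {α β : Type*} (e : α ≃ β) (x : Option α) (s : β) :
    Option.map e x = some s ↔ x = some (e.symm s) := by
  cases x <;> simp [Equiv.eq_symm_apply, eq_comm]

lemma map_eq_none_iff {α β : Type*} (e : α ≃ β) (x : Option α) :
    Option.map e x = none ↔ x = none := by
  cases x <;> simp

end SBS

/-- Corollary 2 / Scheme A: for all positive integers `H, b, r, m` with `r < b`
and `2b ≤ H`, there exists an `m·C(H-2b+r, r)`-regular PDA with parameters
`(m·C(H,b+r), C(H,b)^m, (C(H,b) - C(b+r,r)·C(H-b-r,b-r))·C(H,b)^(m-1), C(H-b,b-r)·C(H,b)^m)`. -/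
theorem strongbs (H b r m : ℕ)
    (hH : 0 < H) (hb : 0 < b) (hr : 0 < r) (hm : 0 < m)
    (hrb : r < b) (hbH : 2 * b ≤ H) :
    ∃ P : Fin ((H.choose b) ^ m) → Fin (m * H.choose (b + r)) →
          Option (Fin ((H - b).choose (b - r) * (H.choose b) ^ m)),
      IsPDA (m * H.choose (b + r)) ((H.choose b) ^ m)
        ((H.choose b - (b + r).choose r * (H - b - r).choose (b - r)) * (H.choose b) ^ (m - 1))
        ((H - b).choose (b - r) * (H.choose b) ^ m) P ∧
      PDARegular (m * H.choose (b + r)) ((H.choose b) ^ m)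
        ((H - b).choose (b - r) * (H.choose b) ^ m) (m * (H - 2 * b + r).choose r) P := by
  classical
  have hF : Fintype.card (SBS.Row H b m) = (H.choose b) ^ m := by
    rw [Fintype.card_fun, SBS.card_BS, Fintype.card_fin]
  have hK : Fintype.card (SBS.Col H b r m) = m * H.choose (b + r) := by
    rw [Fintype.card_prod, Fintype.card_fin, SBS.card_BS]
  have hS : Fintype.card (SBS.Lab H b r m)
      = (H - b).choose (b - r) * (H.choose b) ^ m := by
    rw [Fintype.card_prod, Fintype.card_fun, SBS.card_BS, Fintype.card_fin, Fintype.card_fin]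
    ring
  have eR : Fin ((H.choose b) ^ m) ≃ SBS.Row H b m := (Fintype.equivFinOfCardEq hF).symm
  have eC : Fin (m * H.choose (b + r)) ≃ SBS.Col H b r m := (Fintype.equivFinOfCardEq hK).symm
  have eL : SBS.Lab H b r m ≃ Fin ((H - b).choose (b - r) * (H.choose b) ^ m) :=
    Fintype.equivFinOfCardEq hS
  refine ⟨fun j k => Option.map eL (SBS.P0 H b r m (eR j) (eC k)), ⟨?_, ?_, ?_⟩, ?_⟩
  · intro k
    refine Eq.trans ?_ (SBS.col_count H b r m hm hrb hbH (eC k))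
    exact SBS.card_filter_equiv2 eR _ _ (fun j => SBS.map_eq_none_iff eL _)
  · intro s
    obtain ⟨f, c, hfc⟩ := SBS.exists_cell H b r m hm hrb hbH (eL.symm s)
    refine ⟨eR.symm f, eC.symm c, ?_⟩
    show Option.map (⇑eL) (SBS.P0 H b r m (eR (eR.symm f)) (eC (eC.symm c))) = some s
    rw [Equiv.apply_symm_apply, Equiv.apply_symm_apply, hfc]
    simp
  · intro j1 j2 k1 k2 s h1 h2 hne
    have h1' := (SBS.map_eq_some_iff eL _ _).1 h1
    have h2' := (SBS.map_eq_some_iff eL _ _).1 h2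
    have hnepair : ¬ ((eR j1 : SBS.Row H b m) = eR j2 ∧ (eC k1 : SBS.Col H b r m) = eC k2) := by
      rintro ⟨ha, hb⟩
      exact hne (Prod.ext_iff.2 ⟨eR.injective ha, eC.injective hb⟩)
    constructor
    · show Option.map eL _ = none
      rw [SBS.C3core H b r m hrb (eR j1) (eR j2) (eC k1) (eC k2) (eL.symm s) h1' h2' hnepair]
      rfl
    · have hnepair' : ¬ ((eR j2 : SBS.Row H b m) = eR j1 ∧ (eC k2 : SBS.Col H b r m) = eC k1) :=
        fun hp => hnepair ⟨hp.1.symm, hp.2.symm⟩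
      show Option.map eL _ = none
      rw [SBS.C3core H b r m hrb (eR j2) (eR j1) (eC k2) (eC k1) (eL.symm s) h2' h1' hnepair']
      rfl
  · intro s
    refine Eq.trans ?_ (SBS.reg_count H b r m hrb hbH (eL.symm s))
    exact SBS.card_filter_equiv2 (Equiv.prodCongr eR eC) _ _
      (fun jk => SBS.map_eq_some_iff eL _ _)
end

section
/- For all positive integers q, z, m with z < q and m ≥ 2, there exists an (m·z)-regular placement delivery array with parameters ( m·q, z·binomial(q,z)^m, z·binomial(q−1,z−1)·binomial(q,z)^{m−1}, (z+1)·binomial(q,z+1)·binomial(q,z)^{m−1} ). -/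
open Finset

section PDAOn

variable {R C Sy : Type*} [Fintype R] [Fintype C] [DecidableEq Sy]

/-- `IsPDA` with `g`-regularity for arrays indexed by arbitrary finite types; (C2) follows from
regularity when `0 < g`, and the second half of (C3) is the first one with the roles swapped. -/
structure IsRegularPDAOn (Z g : ℕ) (P : R → C → Option Sy) : Prop where
  card_none : ∀ c, #{r | P r c = none} = Z
  card_some : ∀ s, #{x : R × C | P x.1 x.2 = some s} = g
  eq_none_of_eq_some : ∀ r r' c c' s,
    P r c = some s → P r' c' = some s → (r, c) ≠ (r', c') → P r c' = none

theorem IsRegularPDAOn.exists_isPDA [Fintype Sy] {F K S Z g : ℕ} {P : R → C → Option Sy}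
    (hP : IsRegularPDAOn Z g P) (hg : 0 < g) (hF : Fintype.card R = F)
    (hK : Fintype.card C = K) (hS : Fintype.card Sy = S) :
    ∃ P' : Fin F → Fin K → Option (Fin S), IsPDA K F Z S P' ∧ PDARegular K F S g P' := by
  let eR := Fintype.equivFinOfCardEq hF
  let eC := Fintype.equivFinOfCardEq hK
  let eS := Fintype.equivFinOfCardEq hS
  let P' j k := eS.optionCongr (P (eR.symm j) (eC.symm k))
  have h_none {j k} : P' j k = none ↔ P (eR.symm j) (eC.symm k) = none := by
    simp [P']
  have h_some {j k s} : P' j k = some s ↔ P (eR.symm j) (eC.symm k) = some (eS.symm s) := by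
    simp [P', ← Equiv.eq_symm_apply]
  have card_some (s) : #{x : Fin _ × Fin _ | P' x.1 x.2 = some s} = g :=
    (card_equiv (eR.prodCongr eC).symm fun x => by simp [h_some]).trans
      (hP.card_some (eS.symm s))
  refine ⟨P', ⟨fun k => ?_, fun s => ?_, fun j j' k k' s h h' hne => ?_⟩, card_some⟩
  · exact (card_equiv eR.symm fun j => by simp [h_none]).trans
      (hP.card_none (eC.symm k))
  · obtain ⟨x, hx⟩ := card_pos.1 ((card_some s).symm ▸ hg)
    exact ⟨x.1, x.2, (mem_filter.1 hx).2⟩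
  · have hne' : (eR.symm j, eC.symm k) ≠ (eR.symm j', eC.symm k') := by simpa using hne
    exact ⟨h_none.2 (hP.eq_none_of_eq_some _ _ _ _ _ (h_some.1 h) (h_some.1 h') hne'),
      h_none.2 (hP.eq_none_of_eq_some _ _ _ _ _ (h_some.1 h') (h_some.1 h) hne'.symm)⟩

end PDAOn

section OfEquiv

variable {R C Sy : Type*} {star : R → C → Prop} [∀ r c, Decidable (star r c)]
  {occ : Sy → C → Prop}

def pdaOfEquiv (E : ∀ c, {r // ¬ star r c} ≃ {s // occ s c}) (r : R) (c : C) : Option Sy :=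
  if h : star r c then none else some (E c ⟨r, h⟩).1

variable (E : ∀ c, {r // ¬ star r c} ≃ {s // occ s c})

lemma pdaOfEquiv_eq_none_iff {r : R} {c : C} : pdaOfEquiv E r c = none ↔ star r c := by
  unfold pdaOfEquiv; split_ifs <;> simpa

lemma pdaOfEquiv_eq_some_iff {r : R} {c : C} {s : Sy} :
    pdaOfEquiv E r c = some s ↔ ∃ h : occ s c, ((E c).symm ⟨s, h⟩).1 = r := by
  unfold pdaOfEquiv
  split_ifs with hr
  · simp only [false_iff]
    rintro ⟨h, rfl⟩
    exact ((E c).symm ⟨s, h⟩).2 hr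
  · constructor
    · rintro ⟨⟩
      exact ⟨(E c ⟨r, hr⟩).2, by simp⟩
    · rintro ⟨h, rfl⟩
      simp

theorem isRegularPDAOn_pdaOfEquiv [Fintype R] [Fintype C] [DecidableEq Sy]
    [∀ s c, Decidable (occ s c)] {Z g : ℕ}
    (hZ : ∀ c, #{r | star r c} = Z) (hg : ∀ s, #{c | occ s c} = g)
    (hstar : ∀ c c' (r : {r // ¬ star r c}), c' ≠ c → occ (E c r).1 c' → star r.1 c') :
    IsRegularPDAOn Z g (pdaOfEquiv E) where
  card_none c := by simpa only [pdaOfEquiv_eq_none_iff] using hZ c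
  card_some s := by
    rw [← hg s, ← Fintype.card_subtype, ← Fintype.card_subtype]
    exact Fintype.card_congr
      { toFun x := ⟨x.1.2, ((pdaOfEquiv_eq_some_iff E).1 x.2).1⟩
        invFun c :=
          ⟨(((E c.1).symm ⟨s, c.2⟩).1, c.1), (pdaOfEquiv_eq_some_iff E).2 ⟨c.2, rfl⟩⟩
        left_inv x := Subtype.ext (Prod.ext ((pdaOfEquiv_eq_some_iff E).1 x.2).2 rfl)
        right_inv c := rfl }
  eq_none_of_eq_some r r' c c' s h h' hne := by
    obtain ⟨hc, rfl⟩ := (pdaOfEquiv_eq_some_iff E).1 h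
    obtain ⟨hc', rfl⟩ := (pdaOfEquiv_eq_some_iff E).1 h'
    rw [pdaOfEquiv_eq_none_iff]
    obtain rfl | hcc := eq_or_ne c' c
    · exact absurd rfl hne
    · simpa using hstar c c' ((E c).symm ⟨s, hc⟩) hcc (by simpa using hc')

end OfEquiv

section Exchange

noncomputable def finProdEquivMem {α γ : Type*} {k : ℕ} (s : γ → Finset α)
    (hs : ∀ b, #(s b) = k) : Fin k × γ ≃ {p : γ × α // p.2 ∈ s p.1} :=
  (Equiv.prodComm _ _).trans <| (Equiv.sigmaEquivProd _ _).symm.trans <|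
    (Equiv.sigmaCongrRight fun b => (equivFinOfCardEq (hs b)).symm).trans
      (Equiv.subtypeProdEquivSigmaSubtype fun b a => a ∈ s b).symm

@[simp]
lemma finProdEquivMem_symm_apply_snd {α γ : Type*} {k : ℕ} (s : γ → Finset α)
    (hs : ∀ b, #(s b) = k) (p : {p : γ × α // p.2 ∈ s p.1}) :
    ((finProdEquivMem s hs).symm p).2 = p.1.1 := rfl

variable {α : Type*} [DecidableEq α] {z : ℕ} (j : α)

lemma card_insert_erase_of_mem {B : Finset α} {x : α} (hx : x ∈ B) (hj : j ∉ B) :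
    #(insert j (B.erase x)) = #B := by
  rw [card_insert_of_notMem fun h => hj (mem_of_mem_erase h), card_erase_add_one hx]

def exchangeEquiv :
    {p : {B : {B : Finset α // #B = z} // j ∉ B.1} × α // p.2 ∈ p.1.1.1} ≃
      {p : {T : {T : Finset α // #T = z} // j ∈ T.1} × α // p.2 ∉ p.1.1.1} where
  toFun
    | ⟨(⟨⟨B, hB⟩, hjB⟩, x), hx⟩ =>
      ⟨(⟨⟨insert j (B.erase x), (card_insert_erase_of_mem j hx hjB).trans hB⟩,
        mem_insert_self _ _⟩, x), by simp [ne_of_mem_of_not_mem hx hjB]⟩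
  invFun
    | ⟨(⟨⟨T, hT⟩, hjT⟩, y), hy⟩ =>
      ⟨(⟨⟨insert y (T.erase j), (card_insert_erase_of_mem y hjT hy).trans hT⟩,
        by simp [ne_of_mem_of_not_mem hjT hy]⟩, y), mem_insert_self _ _⟩
  left_inv := by
    rintro ⟨⟨⟨⟨B, hB⟩, hjB⟩, x⟩, hx⟩
    simp [erase_insert (fun h => hjB (mem_of_mem_erase h)), insert_erase hx]
  right_inv := by
    rintro ⟨⟨⟨⟨T, hT⟩, hjT⟩, y⟩, hy⟩
    simp [erase_insert (fun h => hy (mem_of_mem_erase h)), insert_erase hjT]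

variable [Fintype α]

noncomputable def finExchangeEquiv :
    Fin z × {B : {B : Finset α // #B = z} // j ∉ B.1} ≃
      Fin (Fintype.card α - z) × {T : {T : Finset α // #T = z} // j ∈ T.1} :=
  (finProdEquivMem (fun B => B.1.1) fun B => B.1.2).trans <| (exchangeEquiv j).trans <|
    (Equiv.subtypeEquivRight fun _ => mem_compl.symm).trans
      (finProdEquivMem (fun T : {T : {T : Finset α // #T = z} // j ∈ T.1} => T.1.1ᶜ)
        fun T => by rw [card_compl, T.1.2]).symm

lemma mem_of_mem_finExchangeEquiv (x : Fin z × {B : {B : Finset α // #B = z} // j ∉ B.1})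
    {y : α} (hy : y ∈ (finExchangeEquiv j x).2.1.1) (hyj : y ≠ j) : y ∈ x.2.1.1 := by
  obtain ⟨t, ⟨⟨B, hB⟩, hjB⟩⟩ := x
  simp only [finExchangeEquiv, exchangeEquiv, Equiv.trans_apply, Equiv.coe_fn_mk,
    finProdEquivMem_symm_apply_snd, Equiv.subtypeEquivRight_apply_coe, mem_insert, mem_erase,
    ne_eq] at hy
  exact (hy.resolve_left hyj).2

end Exchange

section UpdateAt

variable {ι X Y β : Type*} [DecidableEq ι] {p q : β → Prop}

def updateAtEquiv (i : ι) (e : X × {b // p b} ≃ Y × {b // q b}) :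
    {r : X × (ι → β) // p (r.2 i)} ≃ {s : Y × (ι → β) // q (s.2 i)} where
  toFun r := ⟨((e (r.1.1, ⟨r.1.2 i, r.2⟩)).1,
    Function.update r.1.2 i (e (r.1.1, ⟨r.1.2 i, r.2⟩)).2),
    by simpa using (e (r.1.1, ⟨r.1.2 i, r.2⟩)).2.2⟩
  invFun s := ⟨((e.symm (s.1.1, ⟨s.1.2 i, s.2⟩)).1,
    Function.update s.1.2 i (e.symm (s.1.1, ⟨s.1.2 i, s.2⟩)).2),
    by simpa using (e.symm (s.1.1, ⟨s.1.2 i, s.2⟩)).2.2⟩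
  left_inv r := by simp
  right_inv s := by simp

lemma updateAtEquiv_apply_snd_of_ne (i : ι) (e : X × {b // p b} ≃ Y × {b // q b})
    (r : {r : X × (ι → β) // p (r.2 i)}) {l : ι} (hl : l ≠ i) :
    (updateAtEquiv i e r).1.2 l = r.1.2 l :=
  Function.update_of_ne hl _ _

lemma updateAtEquiv_apply_snd_self (i : ι) (e : X × {b // p b} ≃ Y × {b // q b})
    (r : {r : X × (ι → β) // p (r.2 i)}) :
    (updateAtEquiv i e r).1.2 i = (e (r.1.1, ⟨r.1.2 i, r.2⟩)).2 :=
  Function.update_self _ _ _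

end UpdateAt

section Counting

variable {ι β : Type*} [Fintype ι] [Fintype β]

lemma card_filter_prod_snd {X : Type*} [Fintype X] (p : β → Prop) [DecidablePred p] :
    #{x : X × β | p x.2} = Fintype.card X * #{b | p b} := by
  rw [← card_univ, ← card_product, ← filter_product_right, univ_product_univ]

lemma card_filter_apply [DecidableEq ι] (p : β → Prop) [DecidablePred p] (i : ι) :
    #{f : ι → β | p (f i)} = #{b | p b} * Fintype.card β ^ (Fintype.card ι - 1) := by
  calc #{f : ι → β | p (f i)}
      = Fintype.card {f : ι → β // p (f i)} := (Fintype.card_subtype _).symm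
    _ = Fintype.card ({b // p b} × ({l // l ≠ i} → β)) :=
      Fintype.card_congr <| ((Equiv.piSplitAt i fun _ => β).subtypeEquiv
        (p := fun f => p (f i)) (q := fun x => p x.1) fun _ => Iff.rfl).trans
          Equiv.prodSubtypeFstEquivSubtypeProd
    _ = _ := by
      rw [Fintype.card_prod, Fintype.card_fun, Fintype.card_subtype_compl,
        Fintype.card_subtype_eq, Fintype.card_subtype]

variable {α : Type*} [Fintype α] [DecidableEq α] {z : ℕ}

lemma card_filter_mem_finset_len (hz : 0 < z) (j : α) :
    #{B : {B : Finset α // #B = z} | j ∈ B.1} = (Fintype.card α - 1).choose (z - 1) := by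
  calc #{B : {B : Finset α // #B = z} | j ∈ B.1}
      = Fintype.card {B : {B : Finset α // #B = z} // j ∈ B.1} := (Fintype.card_subtype _).symm
    _ = #{B : Finset α | #B = z ∧ j ∈ B} := by
      rw [← Fintype.card_subtype]
      exact Fintype.card_congr (Equiv.subtypeSubtypeEquivSubtypeInter (#· = z) (j ∈ ·))
    _ = #{B ∈ univ.powersetCard z | {j} ⊆ B} := by
      congr 1; ext B; simp
    _ = _ := by
      rw [card_filter_powersetCard_subset _ _ _ (subset_univ _)
        (by rw [card_singleton]; exact hz)]
      simp

lemma card_filter_mem_apply (B : ι → {B : Finset α // #B = z}) :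
    #{c : ι × α | c.2 ∈ (B c.1).1} = Fintype.card ι * z := by
  rw [card_filter, Fintype.sum_prod_type]
  simp [(B _).2]

end Counting

section ExchangePDA

variable (ι α : Type*) [Fintype ι] [DecidableEq ι] [Fintype α] [DecidableEq α] (z : ℕ)

noncomputable def exchangePDA :
    Fin z × (ι → {B : Finset α // #B = z}) → ι × α →
      Option (Fin (Fintype.card α - z) × (ι → {B : Finset α // #B = z})) :=
  pdaOfEquiv (star := fun r c => c.2 ∈ (r.2 c.1).1) (occ := fun s c => c.2 ∈ (s.2 c.1).1)
    fun c => updateAtEquiv c.1 (finExchangeEquiv c.2)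

theorem isRegularPDAOn_exchangePDA (hz : 0 < z) :
    IsRegularPDAOn
      (z * ((Fintype.card α - 1).choose (z - 1) *
        (Fintype.card α).choose z ^ (Fintype.card ι - 1)))
      (Fintype.card ι * z) (exchangePDA ι α z) := by
  refine isRegularPDAOn_pdaOfEquiv _ (fun c => ?_) (card_filter_mem_apply ·.2) ?_
  · rw [card_filter_prod_snd (fun B : ι → {B : Finset α // #B = z} => c.2 ∈ (B c.1).1),
      card_filter_apply (fun B : {B : Finset α // #B = z} => c.2 ∈ B.1) c.1,
      card_filter_mem_finset_len hz, Fintype.card_finset_len, Fintype.card_fin]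
  · rintro ⟨i, j⟩ ⟨i', j'⟩ r hne hmem
    obtain rfl | hi := eq_or_ne i' i
    · rw [updateAtEquiv_apply_snd_self] at hmem
      exact mem_of_mem_finExchangeEquiv j _ hmem (by simpa using hne)
    · rwa [updateAtEquiv_apply_snd_of_ne _ _ _ hi] at hmem

end ExchangePDA

theorem MNbs_general (q z m : ℕ) (hz : 0 < z) (hm : 2 ≤ m) :
    ∃ P : Fin (z * (q.choose z) ^ m) → Fin (m * q) →
          Option (Fin ((z + 1) * q.choose (z + 1) * (q.choose z) ^ (m - 1))),
      IsPDA (m * q) (z * (q.choose z) ^ m)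
        (z * (q - 1).choose (z - 1) * (q.choose z) ^ (m - 1))
        ((z + 1) * q.choose (z + 1) * (q.choose z) ^ (m - 1)) P ∧
      PDARegular (m * q) (z * (q.choose z) ^ m)
        ((z + 1) * q.choose (z + 1) * (q.choose z) ^ (m - 1)) (m * z) P := by
  obtain ⟨n, rfl⟩ : ∃ n, m = n + 1 := ⟨m - 1, by omega⟩
  have card_symbols :
      (q - z) * q.choose z ^ (n + 1) = (z + 1) * q.choose (z + 1) * q.choose z ^ n :=
    calc (q - z) * q.choose z ^ (n + 1) = q.choose z * (q - z) * q.choose z ^ n := by ring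
      _ = (z + 1) * q.choose (z + 1) * q.choose z ^ n := by
        rw [← Nat.choose_succ_right_eq]; ring
  obtain ⟨P, hP, hreg⟩ := (isRegularPDAOn_exchangePDA (Fin (n + 1)) (Fin q) z hz).exists_isPDA
    (F := z * q.choose z ^ (n + 1)) (K := (n + 1) * q)
    (by simp [hz]) (by simp [Fintype.card_finset_len]) (by simp [mul_comm])
    (by simpa [Fintype.card_finset_len] using card_symbols)
  exact ⟨P, by simpa [mul_assoc] using hP, by simpa using hreg⟩

/-- Theorem 4 / Scheme C: for all positive integers `q, z, m` with `z < q` and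
`m ≥ 2`, there exists an `(m·z)`-regular PDA with parameters
`(m·q, z·C(q,z)^m, z·C(q-1,z-1)·C(q,z)^(m-1), (z+1)·C(q,z+1)·C(q,z)^(m-1))`. -/
theorem MNbs (q z m : ℕ) (hz : 0 < z) (hzq : z < q) (hm : 2 ≤ m) :
    ∃ P : Fin (z * (q.choose z) ^ m) → Fin (m * q) →
          Option (Fin ((z + 1) * q.choose (z + 1) * (q.choose z) ^ (m - 1))),
      IsPDA (m * q) (z * (q.choose z) ^ m)
        (z * (q - 1).choose (z - 1) * (q.choose z) ^ (m - 1))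
        ((z + 1) * q.choose (z + 1) * (q.choose z) ^ (m - 1)) P ∧
      PDARegular (m * q) (z * (q.choose z) ^ m)
        ((z + 1) * q.choose (z + 1) * (q.choose z) ^ (m - 1)) (m * z) P :=
  MNbs_general q z m hz hm
end
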